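/- arXiv:1904.04344 — 7 statements merged into one kernel-verified Lean document; each statement's English description precedes it below -/
import Mathlib

section
/- Let f : [0,∞] → [0,1] be an increasing bijection and d the metric on [0,∞] defined by d(s,t) = |f(s) - f(t)|. Let (ξ_n) be a sequence of [0,∞]-valued random variables and ξ a [0,∞]-valued random variable on a probability space such that for every T ∈ [0,∞) the sequence (ξ_n ∧ T) converges to ξ ∧ T in probability with respect to the Euclidean metric. Then (ξ_n) converges to ξ in probability with respect to the metric d. -/
open MeasureTheory Filter Set
open scoped ENNReal

/-!
Since `f` is a strictly monotone map onto the interval `[0, 1]`, it is continuous on `[0, ∞]`.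
Given `ε > 0`, continuity at `∞` yields a finite level `T` beyond which `f` varies by at most
`ε / 4`, so truncating at `T` moves `f` by at most `ε / 4`; and `f` is uniformly continuous on
the compact interval `[0, T]`, so truncated values that are `δ`-close have `f`-values that are
`ε / 2`-close. Hence `{ε < |f ξₙ - f ξ|} ⊆ {δ < |ξₙ ∧ T - ξ ∧ T|}`, whose measure tends to `0`.
-/

lemma abs_sub_apply_min_le {f : ℝ≥0∞ → ℝ} (hf : Monotone f) (a t : ℝ≥0∞) :
    |f a - f (min a t)| ≤ f ⊤ - f t := by
  rcases le_total a t with h | h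
  · simpa [min_eq_left h] using sub_nonneg.2 (hf le_top)
  · rw [min_eq_right h, abs_of_nonneg (sub_nonneg.2 (hf h))]
    exact sub_le_sub_right (hf le_top) _

lemma toReal_min_ofReal_mem_Icc (a : ℝ≥0∞) {T : ℝ} (hT : 0 ≤ T) :
    (min a (ENNReal.ofReal T)).toReal ∈ Icc 0 T :=
  ⟨ENNReal.toReal_nonneg,
    (ENNReal.toReal_mono ENNReal.ofReal_ne_top (min_le_right _ _)).trans_eq
      (ENNReal.toReal_ofReal hT)⟩

lemma ofReal_toReal_min_ofReal (a : ℝ≥0∞) (T : ℝ) :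
    ENNReal.ofReal (min a (ENNReal.ofReal T)).toReal = min a (ENNReal.ofReal T) :=
  ENNReal.ofReal_toReal (ne_top_of_le_ne_top ENNReal.ofReal_ne_top (min_le_right _ _))

lemma exists_abs_sub_le_of_abs_sub_min_ofReal_le {f : ℝ≥0∞ → ℝ} (hmono : Monotone f)
    (hcont : Continuous f) {ε : ℝ} (hε : 0 < ε) :
    ∃ T : ℝ, 0 ≤ T ∧ ∃ δ > 0, ∀ a b : ℝ≥0∞,
      |(min a (ENNReal.ofReal T)).toReal - (min b (ENNReal.ofReal T)).toReal| ≤ δ →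
        |f a - f b| ≤ ε := by
  have hf_ofReal : Continuous fun x : ℝ => f (ENNReal.ofReal x) :=
    hcont.comp ENNReal.continuous_ofReal
  obtain ⟨T, hT, hfT⟩ : ∃ T : ℝ, 0 ≤ T ∧ f ⊤ - ε / 4 < f (ENNReal.ofReal T) :=
    ((eventually_ge_atTop 0).and <| ((hcont.tendsto ⊤).comp ENNReal.tendsto_ofReal_atTop).eventually
      (eventually_gt_nhds (by linarith))).exists
  obtain ⟨δ, hδ, hunif⟩ := Metric.uniformContinuousOn_iff_le.1
    (isCompact_Icc.uniformContinuousOn_of_continuous hf_ofReal.continuousOn) (ε / 2) (by linarith)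
  refine ⟨T, hT, δ, hδ, fun a b hab => ?_⟩
  set t := ENNReal.ofReal T
  have hmid : |f (min a t) - f (min b t)| ≤ ε / 2 := by
    simpa only [ofReal_toReal_min_ofReal, Real.dist_eq] using
      hunif _ (toReal_min_ofReal_mem_Icc a hT) _ (toReal_min_ofReal_mem_Icc b hT)
        (by rwa [Real.dist_eq])
  calc |f a - f b|
      ≤ |f a - f (min a t)| + |f (min a t) - f (min b t)| + |f (min b t) - f b| :=
        by linarith [abs_sub_le (f a) (f (min a t)) (f (min b t)),
          abs_sub_le (f a) (f (min b t)) (f b)]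
    _ ≤ ε := by
        rw [abs_sub_comm (f (min b t))]
        linarith [abs_sub_apply_min_le hmono a t, abs_sub_apply_min_le hmono b t]

theorem stmt_0_general {Ω : Type*} [MeasurableSpace Ω] (μ : Measure Ω)
    (f : ℝ≥0∞ → ℝ) (hf_mono : StrictMono f) (hf_bij : Set.BijOn f Set.univ (Set.Icc 0 1))
    (ξ : Ω → ℝ≥0∞) (ξn : ℕ → Ω → ℝ≥0∞)
    (hconv : ∀ T : ℝ, 0 ≤ T → ∀ ε : ℝ, 0 < ε →
      Tendsto (fun n => μ {ω | ε < |(min (ξn n ω) (ENNReal.ofReal T)).toReal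
        - (min (ξ ω) (ENNReal.ofReal T)).toReal|}) atTop (nhds 0)) :
    ∀ ε : ℝ, 0 < ε →
      Tendsto (fun n => μ {ω | ε < |f (ξn n ω) - f (ξ ω)|}) atTop (nhds 0) := by
  intro ε hε
  have hrange : range f = Icc 0 1 := by rw [← image_univ, hf_bij.image_eq]
  have hcont : Continuous f :=
    (hf_mono.isEmbedding_of_ordConnected (hrange ▸ ordConnected_Icc)).continuous
  obtain ⟨T, hT, δ, hδ, hcontrol⟩ :=
    exists_abs_sub_le_of_abs_sub_min_ofReal_le hf_mono.monotone hcont hε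
  refine tendsto_of_tendsto_of_tendsto_of_le_of_le tendsto_const_nhds (hconv T hT δ hδ)
    (fun n => zero_le) fun n => measure_mono fun ω hω =>
      lt_of_not_ge fun hle => (hcontrol _ _ hle).not_gt hω

/-- If `f : [0,∞] → [0,1]` is an increasing bijection and
`d(s,t) = |f s - f t|`, and if `ξ_n ∧ T → ξ ∧ T` in probability (Euclidean metric)
for every finite `T`, then `ξ_n → ξ` in probability with respect to `d`. -/
theorem stmt_0 {Ω : Type*} [MeasurableSpace Ω] (μ : Measure Ω) [IsProbabilityMeasure μ]
    (f : ℝ≥0∞ → ℝ) (hf_mono : StrictMono f) (hf_bij : Set.BijOn f Set.univ (Set.Icc 0 1))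
    (ξ : Ω → ℝ≥0∞) (ξn : ℕ → Ω → ℝ≥0∞)
    (hconv : ∀ T : ℝ, 0 ≤ T → ∀ ε : ℝ, 0 < ε →
      Tendsto (fun n => μ {ω | ε < |(min (ξn n ω) (ENNReal.ofReal T)).toReal
        - (min (ξ ω) (ENNReal.ofReal T)).toReal|}) atTop (nhds 0)) :
    ∀ ε : ℝ, 0 < ε →
      Tendsto (fun n => μ {ω | ε < |f (ξn n ω) - f (ξ ω)|}) atTop (nhds 0) :=
  stmt_0_general μ f hf_mono hf_bij ξ ξn hconv
end

section
/- The function ψ : (0,1] → ℝ defined by ψ(x) = [(1+√x)·log(1+√x) + (1-√x)·log(1-√x)] / x (with the convention 0·log 0 = 0, so ψ(1) = 2·log 2) is continuous, strictly increasing, and is a bijection from (0,1] onto (1, 2·log 2]. In particular, lim_{x→0+} ψ(x) = 1. -/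
/-!
Substituting `t = √x` gives `ψ(x) = g(t) / t²` with `g(t) = (1+t) log(1+t) + (1-t) log(1-t)`,
whose derivative is `g'(t) = log((1+t)/(1-t))`. The quotient is increasing because
`(g/t²)' = (t g'(t) - 2 g(t)) / t³`, and `h = t g' - 2 g` vanishes at `0` with
`h'(t) = 2t/(1-t²) - g'(t)`, which again vanishes at `0` and has derivative `4t²/(1-t²)² > 0`.
The second-order Taylor bound for `log` gives `|g(t) - t²| ≤ 2|t|³/(1-|t|)`, hence `ψ → 1` at `0⁺`;
a continuous strictly increasing function on `(0, 1]` with that limit maps onto `(1, ψ 1]`.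
-/

open Set Real Filter Topology

theorem lt_of_hasDerivAt_pos {f f' : ℝ → ℝ} {a b : ℝ} (hab : a < b)
    (hf : ∀ x ∈ Icc a b, HasDerivAt f (f' x) x) (hf' : ∀ x ∈ Ioo a b, 0 < f' x) : f a < f b := by
  obtain ⟨c, hc, hslope⟩ := exists_hasDerivAt_eq_slope f f' hab
    (fun x hx => (hf x hx).continuousAt.continuousWithinAt)
    (fun x hx => hf x (Ioo_subset_Icc_self hx))
  have := hf' c hc
  rw [hslope, div_pos_iff_of_pos_right (sub_pos.2 hab)] at this
  linarith

theorem StrictMonoOn.bijOn_Ioc_of_tendsto {α δ : Type*} [ConditionallyCompleteLinearOrder α]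
    [TopologicalSpace α] [OrderTopology α] [DenselyOrdered α]
    [LinearOrder δ] [TopologicalSpace δ] [OrderClosedTopology δ]
    {f : α → δ} {a b : α} {c : δ} (hab : a < b) (hf : ContinuousOn f (Ioc a b))
    (hmono : StrictMonoOn f (Ioc a b)) (hlim : Tendsto f (𝓝[>] a) (𝓝 c)) :
    BijOn f (Ioc a b) (Ioc c (f b)) := by
  have hlim' (t : α) : Tendsto f (𝓝[Ioc a t] a) (𝓝 c) :=
    hlim.mono_left (nhdsWithin_mono _ Ioc_subset_Ioi_self)
  refine ⟨fun t ht => ⟨?_, hmono.monotoneOn ht ⟨hab, le_rfl⟩ ht.2⟩, hmono.injOn, ?_⟩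
  · obtain ⟨s, has, hst⟩ := exists_between ht.1
    have hsb : s ≤ b := hst.le.trans ht.2
    have : NeBot (𝓝[Ioc a s] a) := left_nhdsWithin_Ioc_neBot has
    have hcs : c ≤ f s := le_of_tendsto (hlim' s) <| eventually_nhdsWithin_of_forall
      fun u hu => hmono.monotoneOn ⟨hu.1, hu.2.trans hsb⟩ ⟨has, hsb⟩ hu.2
    exact hcs.trans_lt (hmono ⟨has, hsb⟩ ht hst)
  · have : NeBot (𝓝[Ioc a b] a) := left_nhdsWithin_Ioc_neBot hab
    exact isPreconnected_Ioc.intermediate_value_Ioc (l := 𝓝[Ioc a b] a) ⟨hab, le_rfl⟩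
      inf_le_right hf (hlim' b)

noncomputable def symmMulLog (t : ℝ) : ℝ := (1 + t) * log (1 + t) + (1 - t) * log (1 - t)

noncomputable def logRatio (t : ℝ) : ℝ := log (1 + t) - log (1 - t)

theorem continuous_symmMulLog : Continuous symmMulLog :=
  (continuous_mul_log.comp (continuous_const_add 1)).add
    (continuous_mul_log.comp (continuous_sub_left 1))

theorem symmMulLog_zero : symmMulLog 0 = 0 := by simp [symmMulLog]

theorem symmMulLog_one : symmMulLog 1 = 2 * log 2 := by norm_num [symmMulLog]

theorem hasDerivAt_symmMulLog {t : ℝ} (h₁ : 1 + t ≠ 0) (h₂ : 1 - t ≠ 0) :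
    HasDerivAt symmMulLog (logRatio t) t := by
  have := ((hasDerivAt_mul_log h₁).comp t ((hasDerivAt_id t).const_add 1)).add
    ((hasDerivAt_mul_log h₂).comp t ((hasDerivAt_id t).const_sub 1))
  exact this.congr_deriv (by rw [logRatio]; ring)

theorem hasDerivAt_logRatio {t : ℝ} (h₁ : 1 + t ≠ 0) (h₂ : 1 - t ≠ 0) :
    HasDerivAt logRatio (2 / (1 - t ^ 2)) t := by
  have := ((hasDerivAt_log h₁).comp t ((hasDerivAt_id t).const_add 1)).sub
    ((hasDerivAt_log h₂).comp t ((hasDerivAt_id t).const_sub 1))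
  have h : 1 - t ^ 2 ≠ 0 := by
    rw [show 1 - t ^ 2 = (1 + t) * (1 - t) by ring]; exact mul_ne_zero h₁ h₂
  exact this.congr_deriv (by field_simp; ring)

theorem logRatio_lt {t : ℝ} (h₀ : 0 < t) (h₁ : t < 1) : logRatio t < 2 * t / (1 - t ^ 2) := by
  have hderiv (x : ℝ) (hx : x ∈ Icc 0 t) : HasDerivAt (fun x => 2 * x / (1 - x ^ 2) - logRatio x)
      (4 * x ^ 2 / (1 - x ^ 2) ^ 2) x := by
    have hx₁ : 1 + x ≠ 0 := by linarith [hx.1]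
    have hx₂ : 1 - x ≠ 0 := by linarith [hx.2]
    have hx₃ : 1 - x ^ 2 ≠ 0 := by nlinarith [hx.1, hx.2]
    have := (((hasDerivAt_id' x).const_mul 2).div ((hasDerivAt_pow 2 x).const_sub 1) hx₃).sub
      (hasDerivAt_logRatio hx₁ hx₂)
    exact this.congr_deriv (by field_simp; ring)
  have := lt_of_hasDerivAt_pos h₀ hderiv fun x ⟨hx₀, hxt⟩ => by
    have : 0 < 1 - x ^ 2 := by nlinarith
    positivity
  simpa [logRatio] using this

theorem two_mul_symmMulLog_lt {t : ℝ} (h₀ : 0 < t) (h₁ : t < 1) :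
    2 * symmMulLog t < t * logRatio t := by
  have hderiv (x : ℝ) (hx : x ∈ Icc 0 t) : HasDerivAt (fun x => x * logRatio x - 2 * symmMulLog x)
      (2 * x / (1 - x ^ 2) - logRatio x) x := by
    have hx₁ : 1 + x ≠ 0 := by linarith [hx.1]
    have hx₂ : 1 - x ≠ 0 := by linarith [hx.2]
    have := ((hasDerivAt_id' x).mul (hasDerivAt_logRatio hx₁ hx₂)).sub
      ((hasDerivAt_symmMulLog hx₁ hx₂).const_mul 2)
    exact this.congr_deriv (by field_simp; ring)
  have := lt_of_hasDerivAt_pos h₀ hderiv fun x hx => sub_pos.2 (logRatio_lt hx.1 (hx.2.trans h₁))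
  simpa [symmMulLog_zero] using this

noncomputable def symmMulLogDivSq (t : ℝ) : ℝ := symmMulLog t / t ^ 2

theorem continuousOn_symmMulLogDivSq : ContinuousOn symmMulLogDivSq {0}ᶜ :=
  continuous_symmMulLog.continuousOn.div (continuous_pow 2).continuousOn
    fun _ ht => pow_ne_zero 2 ht

theorem strictMonoOn_symmMulLogDivSq : StrictMonoOn symmMulLogDivSq (Ioc 0 1) := by
  refine strictMonoOn_of_hasDerivWithinAt_pos
    (f' := fun t => (logRatio t * t ^ 2 - symmMulLog t * (2 * t)) / (t ^ 2) ^ 2)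
    (convex_Ioc 0 1) (continuousOn_symmMulLogDivSq.mono fun t ht => ht.1.ne')
    (fun t ht => ?_) (fun t ht => ?_)
  · rw [interior_Ioc] at ht
    have := (hasDerivAt_symmMulLog (by linarith [ht.1]) (by linarith [ht.2])).div
      (hasDerivAt_pow 2 t) (pow_ne_zero 2 ht.1.ne')
    exact (this.congr_deriv (by ring)).hasDerivWithinAt
  · rw [interior_Ioc] at ht
    obtain ⟨h₀, h₁⟩ := ht
    have := two_mul_symmMulLog_lt h₀ h₁
    have : 0 < logRatio t * t ^ 2 - symmMulLog t * (2 * t) := by nlinarith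
    positivity

theorem abs_symmMulLog_sub_sq_le {t : ℝ} (ht : |t| < 1) :
    |symmMulLog t - t ^ 2| ≤ 2 * |t| ^ 3 / (1 - |t|) := by
  have hplus : |-t + t ^ 2 / 2 + log (1 + t)| ≤ |t| ^ 3 / (1 - |t|) := by
    simpa [Finset.sum_range_succ, one_add_one_eq_two] using
      abs_log_sub_add_sum_range_le (x := -t) (by rwa [abs_neg]) 2
  have hminus : |t + t ^ 2 / 2 + log (1 - t)| ≤ |t| ^ 3 / (1 - |t|) := by
    simpa [Finset.sum_range_succ, one_add_one_eq_two] using abs_log_sub_add_sum_range_le ht 2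
  have h₁ : 0 ≤ 1 + t := by linarith [neg_abs_le t]
  have h₂ : 0 ≤ 1 - t := by linarith [le_abs_self t]
  calc |symmMulLog t - t ^ 2|
      = |(1 + t) * (-t + t ^ 2 / 2 + log (1 + t)) + (1 - t) * (t + t ^ 2 / 2 + log (1 - t))| := by
        rw [symmMulLog]; ring_nf
    _ ≤ (1 + t) * (|t| ^ 3 / (1 - |t|)) + (1 - t) * (|t| ^ 3 / (1 - |t|)) := by
        refine (abs_add_le _ _).trans (add_le_add ?_ ?_) <;>
          rw [abs_mul, abs_of_nonneg (by assumption)] <;> gcongr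
    _ = 2 * |t| ^ 3 / (1 - |t|) := by ring

theorem tendsto_symmMulLogDivSq : Tendsto symmMulLogDivSq (𝓝[≠] 0) (𝓝 1) := by
  have hbound : ∀ᶠ t in 𝓝[≠] (0 : ℝ), ‖symmMulLogDivSq t - 1‖ ≤ 2 * |t| / (1 - |t|) := by
    filter_upwards [self_mem_nhdsWithin, nhdsWithin_le_nhds (Ioo_mem_nhds neg_one_lt_zero one_pos)]
      with t (ht : t ≠ 0) ht₁
    have ht₂ : 0 < t ^ 2 := by positivity
    rw [Real.norm_eq_abs, symmMulLogDivSq, div_sub_one ht₂.ne', abs_div, abs_of_pos ht₂,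
      div_le_iff₀ ht₂]
    calc |symmMulLog t - t ^ 2|
        ≤ 2 * |t| ^ 3 / (1 - |t|) := abs_symmMulLog_sub_sq_le (abs_lt.2 ht₁)
      _ = 2 * |t| / (1 - |t|) * t ^ 2 := by rw [← sq_abs t]; ring
  have hlim : Tendsto (fun t : ℝ => 2 * |t| / (1 - |t|)) (𝓝 0) (𝓝 0) := by
    have : ContinuousAt (fun t : ℝ => 2 * |t| / (1 - |t|)) 0 :=
      ContinuousAt.div (by fun_prop) (by fun_prop) (by norm_num)
    simpa using this.tendsto
  exact tendsto_sub_nhds_zero_iff.1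
    (squeeze_zero_norm' hbound (tendsto_nhdsWithin_of_tendsto_nhds hlim))

theorem mapsTo_sqrt_Ioc_zero_one : MapsTo sqrt (Ioc 0 1) (Ioc 0 1) :=
  fun _ hx => ⟨sqrt_pos.2 hx.1, sqrt_le_one.2 hx.2⟩

theorem tendsto_sqrt_nhdsGT_zero : Tendsto sqrt (𝓝[>] 0) (𝓝[>] 0) :=
  tendsto_nhdsWithin_iff.2 ⟨(continuous_sqrt.tendsto' 0 0 sqrt_zero).mono_left nhdsWithin_le_nhds,
    eventually_nhdsWithin_of_forall fun _ hx => sqrt_pos.2 hx⟩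

/-- `ψ(x) = ((1+√x)log(1+√x) + (1-√x)log(1-√x))/x` is continuous and
strictly increasing on `(0,1]`, a bijection from `(0,1]` onto `(1, 2 log 2]`, and
`ψ(x) → 1` as `x → 0+`. -/
theorem stmt_6 :
    let ψ : ℝ → ℝ := fun x =>
      ((1 + Real.sqrt x) * Real.log (1 + Real.sqrt x) +
        (1 - Real.sqrt x) * Real.log (1 - Real.sqrt x)) / x
    ContinuousOn ψ (Set.Ioc 0 1) ∧ StrictMonoOn ψ (Set.Ioc 0 1) ∧
      Set.BijOn ψ (Set.Ioc 0 1) (Set.Ioc 1 (2 * Real.log 2)) ∧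
      Tendsto ψ (nhdsWithin 0 (Set.Ioi 0)) (nhds 1) := by
  intro ψ
  have hψ : ψ = symmMulLogDivSq ∘ sqrt := by
    funext x
    -- for `x < 0` both sides vanish, since `√x = 0`
    rcases le_or_gt 0 x with hx | hx
    · simp [ψ, symmMulLogDivSq, symmMulLog, sq_sqrt hx]
    · simp [ψ, symmMulLogDivSq, sqrt_eq_zero'.2 hx.le]
  have hcont : ContinuousOn ψ (Ioc 0 1) := hψ ▸
    (continuousOn_symmMulLogDivSq.mono fun _ ht => ht.1.ne').comp continuous_sqrt.continuousOn
      mapsTo_sqrt_Ioc_zero_one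
  have hmono : StrictMonoOn ψ (Ioc 0 1) := hψ ▸ strictMonoOn_symmMulLogDivSq.comp
    (strictMonoOn_sqrt.mono fun _ hx => hx.1.le) mapsTo_sqrt_Ioc_zero_one
  have hlim : Tendsto ψ (𝓝[>] 0) (𝓝 1) := hψ ▸ tendsto_symmMulLogDivSq.comp
    (tendsto_sqrt_nhdsGT_zero.mono_right (nhdsWithin_mono 0 fun _ hx => ne_of_gt hx))
  have hψ₁ : ψ 1 = 2 * log 2 := by simp [hψ, symmMulLogDivSq, symmMulLog_one]
  exact ⟨hcont, hmono, hψ₁ ▸ hmono.bijOn_Ioc_of_tendsto one_pos hcont hlim, hlim⟩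
end

section
/- Fix p ∈ (-∞, 1) \ ([-1/2, 0] ∪ {1/2}). The function ψ : (0,1] → ℝ defined by ψ(x) = [2 - (1 + x^{1-p})^{2(1-p)} - (1 - x^{1-p})^{2(1-p)}] / [2(2p-1)(1-p)·x^{2(1-p)}] is continuous, strictly increasing, and a bijection from (0,1] onto the interval (1, (1 - 2^{1-2p})/((2p-1)(1-p))]. In particular, lim_{x→0+} ψ(x) = 1. -/
/-!
Put `q = 2(1-p)`, so `q > 0`, `q ≠ 1`, `q ∉ [2,3]`, and `t = x^(1-p)`, an increasing bijection
of `(0,1]`. Then `ψ(x) = G(t)/t²` with `G(t) = rpowDefect q t = (2 - (1+t)^q - (1-t)^q)/(q(1-q))`,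
for which `G(0) = G'(0) = 0`, `G'' = (1+t)^(q-2) + (1-t)^(q-2)` (so `G''(0) = 2`) and
`G''' = (q-2)((1+t)^(q-3) - (1-t)^(q-3))`, which is positive on `(0,1)` precisely because
`q ∉ [2,3]`. Since `(G/t²)' = (tG' - 2G)/t³`, where `tG' - 2G` and its derivative `tG'' - G'`
vanish at `0` and `(tG'' - G')' = tG''' > 0`, the quotient `G/t²` is strictly increasing; by
l'Hôpital it tends to `G''(0)/2 = 1` at `0+`, and the intermediate value theorem gives the
bijection onto `(1, ψ(1)]`.
-/

open Set Real Filter Topology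

theorem pos_of_hasDerivAt_pos {f f' : ℝ → ℝ} {a b : ℝ} (hfa : f a = 0)
    (hf : ∀ t ∈ Ico a b, HasDerivAt f (f' t) t) (hf' : ∀ t ∈ Ioo a b, 0 < f' t) :
    ∀ t ∈ Ioo a b, 0 < f t := by
  have hmono : StrictMonoOn f (Ico a b) := by
    refine strictMonoOn_of_deriv_pos (convex_Ico a b)
      (fun t ht => (hf t ht).continuousAt.continuousWithinAt) fun t ht => ?_
    rw [interior_Ico] at ht
    rw [(hf t (Ioo_subset_Ico_self ht)).deriv]
    exact hf' t ht
  intro t ht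
  simpa [hfa] using hmono (left_mem_Ico.2 (ht.1.trans ht.2)) (Ioo_subset_Ico_self ht) ht.1

section DivSq

variable {G G' G'' G''' : ℝ → ℝ} {b : ℝ}

theorem strictMonoOn_div_sq_of_third_deriv_pos
    (hG : ∀ t ∈ Ico 0 b, HasDerivAt G (G' t) t) (hG' : ∀ t ∈ Ico 0 b, HasDerivAt G' (G'' t) t)
    (hG'' : ∀ t ∈ Ico 0 b, HasDerivAt G'' (G''' t) t) (hG0 : G 0 = 0) (hG'0 : G' 0 = 0)
    (hG''' : ∀ t ∈ Ioo 0 b, 0 < G''' t) (hcont : ContinuousOn G (Ioc 0 b)) :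
    StrictMonoOn (fun t => G t / t ^ 2) (Ioc 0 b) := by
  have hw : ∀ t ∈ Ioo 0 b, 0 < t * G'' t - G' t := by
    refine pos_of_hasDerivAt_pos (by simp [hG'0]) (fun t ht => ?_)
      fun t ht => mul_pos ht.1 (hG''' t ht)
    exact (((hasDerivAt_id' t).mul (hG'' t ht)).sub (hG' t ht)).congr_deriv (by ring)
  have hu : ∀ t ∈ Ioo 0 b, 0 < t * G' t - 2 * G t := by
    refine pos_of_hasDerivAt_pos (by simp [hG0]) (fun t ht => ?_) hw
    exact (((hasDerivAt_id' t).mul (hG' t ht)).sub ((hG t ht).const_mul 2)).congr_deriv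
      (by ring)
  refine strictMonoOn_of_deriv_pos (convex_Ioc 0 b)
    (hcont.div (continuousOn_pow 2) fun t ht => pow_ne_zero 2 ht.1.ne') fun t ht => ?_
  rw [interior_Ioc] at ht
  have ht0 : t ≠ 0 := ht.1.ne'
  have hd : HasDerivAt (fun t => G t / t ^ 2) ((t * G' t - 2 * G t) / t ^ 3) t :=
    ((hG t ⟨ht.1.le, ht.2⟩).div (hasDerivAt_pow 2 t) (pow_ne_zero 2 ht0)).congr_deriv <| by
      push_cast
      field_simp
  rw [hd.deriv]
  exact div_pos (hu t ht) (pow_pos ht.1 3)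

theorem tendsto_div_sq_nhdsGT_zero (hb : 0 < b) (hG : ∀ t ∈ Ico 0 b, HasDerivAt G (G' t) t)
    (hG' : HasDerivAt G' (G'' 0) 0) (hG0 : G 0 = 0) (hG'0 : G' 0 = 0) :
    Tendsto (fun t => G t / t ^ 2) (𝓝[>] 0) (𝓝 (G'' 0 / 2)) := by
  have hslope : Tendsto (fun t => G' t / t) (𝓝[>] 0) (𝓝 (G'' 0)) := by
    refine ((hasDerivAt_iff_tendsto_slope.1 hG').mono_left
      (nhdsWithin_mono _ fun t ht => ne_of_gt ht)).congr fun t => ?_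
    simp [slope_def_field, hG'0]
  refine HasDerivAt.lhopital_zero_right_on_Ioo hb (fun t ht => hG t (Ioo_subset_Ico_self ht))
    (fun t _ => hasDerivAt_pow 2 t) (fun t ht => by simp [ht.1.ne']) ?_ ?_ ?_
  · simpa [hG0] using
      (hG 0 (left_mem_Ico.2 hb)).continuousAt.tendsto.mono_left nhdsWithin_le_nhds
  · simpa using ((continuous_pow 2).tendsto (0 : ℝ)).mono_left nhdsWithin_le_nhds
  · refine (hslope.div_const 2).congr fun t => ?_
    simp only [Nat.cast_ofNat, pow_one, Nat.add_one_sub_one]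
    ring

end DivSq

theorem StrictMonoOn.bijOn_Ioc_of_tendsto_s7 {f : ℝ → ℝ} {a b L : ℝ} (hab : a < b)
    (hmono : StrictMonoOn f (Ioc a b)) (hcont : ContinuousOn f (Ioc a b))
    (hlim : Tendsto f (𝓝[>] a) (𝓝 L)) :
    BijOn f (Ioc a b) (Ioc L (f b)) := by
  have hmem : Ioc a b ∈ 𝓝[>] a := Ioc_mem_nhdsGT hab
  refine ⟨fun x hx => ⟨?_, hmono.monotoneOn hx (right_mem_Ioc.2 hab) hx.2⟩, hmono.injOn,
    fun z hz => isPreconnected_Ioc.intermediate_value_Ioc (right_mem_Ioc.2 hab)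
      (le_principal_iff.2 hmem) hcont hlim hz⟩
  obtain ⟨y, hy⟩ := exists_between hx.1
  have hyb : y ≤ b := hy.2.le.trans hx.2
  have hLy : L ≤ f y := le_of_tendsto hlim <| by
    filter_upwards [Ioo_mem_nhdsGT hy.1] with w hw
    exact hmono.monotoneOn ⟨hw.1, hw.2.le.trans hyb⟩ ⟨hy.1, hyb⟩ hw.2.le
  exact hLy.trans_lt (hmono ⟨hy.1, hyb⟩ hx hy.2)

theorem tendsto_rpow_nhdsGT_zero {r : ℝ} (hr : 0 < r) :
    Tendsto (fun x : ℝ => x ^ r) (𝓝[>] 0) (𝓝[>] 0) :=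
  tendsto_nhdsWithin_of_tendsto_nhds_of_eventually_within _
    ((continuousAt_rpow_const 0 r (Or.inr hr.le)).tendsto.mono_left nhdsWithin_le_nhds
      |>.trans_eq (congrArg 𝓝 (zero_rpow hr.ne')))
    (eventually_nhdsWithin_of_forall fun _ hx => rpow_pos_of_pos hx r)

noncomputable def symmRpowSum (r t : ℝ) : ℝ := (1 + t) ^ r + (1 - t) ^ r

noncomputable def symmRpowDiff (r t : ℝ) : ℝ := (1 + t) ^ r - (1 - t) ^ r

section SymmRpow

variable {r t : ℝ}

theorem hasDerivAt_one_add_rpow (r : ℝ) (ht : -1 < t) :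
    HasDerivAt (fun s => (1 + s) ^ r) (r * (1 + t) ^ (r - 1)) t :=
  (((hasDerivAt_id' t).const_add 1).rpow_const (Or.inl (by linarith))).congr_deriv (by ring)

theorem hasDerivAt_one_sub_rpow (r : ℝ) (ht : t < 1) :
    HasDerivAt (fun s => (1 - s) ^ r) (-(r * (1 - t) ^ (r - 1))) t :=
  (((hasDerivAt_id' t).const_sub 1).rpow_const (Or.inl (by linarith))).congr_deriv (by ring)

theorem hasDerivAt_symmRpowSum (r : ℝ) (ht : t ∈ Ioo (-1) 1) :
    HasDerivAt (symmRpowSum r) (r * symmRpowDiff (r - 1) t) t :=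
  ((hasDerivAt_one_add_rpow r ht.1).add (hasDerivAt_one_sub_rpow r ht.2)).congr_deriv <| by
    rw [symmRpowDiff]; ring

theorem hasDerivAt_symmRpowDiff (r : ℝ) (ht : t ∈ Ioo (-1) 1) :
    HasDerivAt (symmRpowDiff r) (r * symmRpowSum (r - 1) t) t :=
  ((hasDerivAt_one_add_rpow r ht.1).sub (hasDerivAt_one_sub_rpow r ht.2)).congr_deriv <| by
    rw [symmRpowSum]; ring

@[simp]
theorem symmRpowSum_zero (r : ℝ) : symmRpowSum r 0 = 2 := by
  norm_num [symmRpowSum]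

@[simp]
theorem symmRpowDiff_zero (r : ℝ) : symmRpowDiff r 0 = 0 := by
  simp [symmRpowDiff]

theorem symmRpowDiff_pos (hr : 0 < r) (ht : t ∈ Ioo 0 1) : 0 < symmRpowDiff r t :=
  sub_pos.2 <| rpow_lt_rpow (by linarith [ht.2]) (by linarith [ht.1]) hr

theorem symmRpowDiff_neg (hr : r < 0) (ht : t ∈ Ioo 0 1) : symmRpowDiff r t < 0 :=
  sub_neg.2 <| rpow_lt_rpow_of_neg (by linarith [ht.2]) (by linarith [ht.1]) hr

theorem mul_symmRpowDiff_sub_one_pos (hr : r ∉ Icc 0 1) (ht : t ∈ Ioo 0 1) :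
    0 < r * symmRpowDiff (r - 1) t := by
  have hr0 : r ≠ 0 := by
    rintro rfl
    exact hr ⟨le_rfl, zero_le_one⟩
  rcases hr0.lt_or_gt with hr0 | hr0
  · exact mul_pos_of_neg_of_neg hr0 (symmRpowDiff_neg (by linarith) ht)
  · have hr1 : 1 < r := lt_of_not_ge fun h => hr ⟨hr0.le, h⟩
    exact mul_pos hr0 (symmRpowDiff_pos (by linarith) ht)

end SymmRpow

noncomputable def rpowDefect (q t : ℝ) : ℝ := (2 - symmRpowSum q t) / (q * (1 - q))

section RpowDefect

variable {q t : ℝ}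

theorem hasDerivAt_rpowDefect (hq0 : q ≠ 0) (hq1 : q ≠ 1) (ht : t ∈ Ioo (-1) 1) :
    HasDerivAt (rpowDefect q) (symmRpowDiff (q - 1) t / (q - 1)) t :=
  (((hasDerivAt_symmRpowSum q ht).const_sub 2).div_const (q * (1 - q))).congr_deriv <| by
    have : q - 1 ≠ 0 := sub_ne_zero.2 hq1
    have : 1 - q ≠ 0 := sub_ne_zero.2 hq1.symm
    field_simp
    ring

theorem hasDerivAt_symmRpowDiff_div (hq1 : q ≠ 1) (ht : t ∈ Ioo (-1) 1) :
    HasDerivAt (fun t => symmRpowDiff (q - 1) t / (q - 1)) (symmRpowSum (q - 2) t) t :=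
  ((hasDerivAt_symmRpowDiff (q - 1) ht).div_const (q - 1)).congr_deriv <| by
    rw [show q - 1 - 1 = q - 2 by ring, mul_div_cancel_left₀ _ (sub_ne_zero.2 hq1)]

theorem continuous_rpowDefect (hq : 0 ≤ q) : Continuous (rpowDefect q) :=
  (continuous_const.sub (((continuous_rpow_const hq).comp (continuous_const.add continuous_id)).add
    ((continuous_rpow_const hq).comp (continuous_const.sub continuous_id)))).div_const _

theorem continuousOn_rpowDefect_div_sq (hq : 0 ≤ q) :
    ContinuousOn (fun t => rpowDefect q t / t ^ 2) (Ioc 0 1) :=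
  (continuous_rpowDefect hq).continuousOn.div (continuousOn_pow 2)
    fun _ ht => pow_ne_zero 2 ht.1.ne'

theorem strictMonoOn_rpowDefect_div_sq (hq0 : 0 < q) (hq1 : q ≠ 1) (hq : q ∉ Icc 2 3) :
    StrictMonoOn (fun t => rpowDefect q t / t ^ 2) (Ioc 0 1) := by
  have hIco : Ico (0 : ℝ) 1 ⊆ Ioo (-1) 1 := Ico_subset_Ioo_left (by norm_num)
  refine strictMonoOn_div_sq_of_third_deriv_pos
    (fun t ht => hasDerivAt_rpowDefect hq0.ne' hq1 (hIco ht))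
    (fun t ht => hasDerivAt_symmRpowDiff_div hq1 (hIco ht))
    (fun t ht => hasDerivAt_symmRpowSum (q - 2) (hIco ht)) (by simp [rpowDefect]) (by simp)
    (fun t ht => mul_symmRpowDiff_sub_one_pos ?_ ht) (continuous_rpowDefect hq0.le).continuousOn
  rintro ⟨h2, h3⟩
  exact hq ⟨by linarith, by linarith⟩

theorem tendsto_rpowDefect_div_sq (hq0 : q ≠ 0) (hq1 : q ≠ 1) :
    Tendsto (fun t => rpowDefect q t / t ^ 2) (𝓝[>] 0) (𝓝 1) := by
  have hIco : Ico (0 : ℝ) 1 ⊆ Ioo (-1) 1 := Ico_subset_Ioo_left (by norm_num)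
  have := tendsto_div_sq_nhdsGT_zero one_pos
    (fun t ht => hasDerivAt_rpowDefect hq0 hq1 (hIco ht))
    (hasDerivAt_symmRpowDiff_div hq1 (t := 0) (by norm_num)) (by simp [rpowDefect]) (by simp)
  simpa using this

end RpowDefect

/-- for `p ∈ (-∞,1) \ ([-1/2,0] ∪ {1/2})`, the function
`ψ(x) = (2 - (1+x^{1-p})^{2(1-p)} - (1-x^{1-p})^{2(1-p)}) / (2(2p-1)(1-p) x^{2(1-p)})`
is continuous, strictly increasing, a bijection from `(0,1]` onto
`(1, (1-2^{1-2p})/((2p-1)(1-p))]`, and `ψ(x) → 1` as `x → 0+`. -/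
theorem stmt_7 (p : ℝ) (hp : p < 1) (hp' : p ∉ Set.Icc (-(1 / 2) : ℝ) 0)
    (hp'' : p ≠ 1 / 2) :
    let ψ : ℝ → ℝ := fun x =>
      (2 - (1 + x ^ (1 - p)) ^ (2 * (1 - p)) - (1 - x ^ (1 - p)) ^ (2 * (1 - p))) /
        (2 * (2 * p - 1) * (1 - p) * x ^ (2 * (1 - p)))
    ContinuousOn ψ (Set.Ioc 0 1) ∧ StrictMonoOn ψ (Set.Ioc 0 1) ∧
      Set.BijOn ψ (Set.Ioc 0 1)
        (Set.Ioc 1 ((1 - 2 ^ (1 - 2 * p)) / ((2 * p - 1) * (1 - p)))) ∧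
      Tendsto ψ (nhdsWithin 0 (Set.Ioi 0)) (nhds 1) := by
  intro ψ
  have hp1 : 0 < 1 - p := by linarith
  have hq0 : 0 < 2 * (1 - p) := by linarith
  have hq1 : 2 * (1 - p) ≠ 1 := fun h => hp'' (by linarith)
  have hq23 : 2 * (1 - p) ∉ Icc 2 3 := fun h => hp' ⟨by linarith [h.2], by linarith [h.1]⟩
  set F := fun t => rpowDefect (2 * (1 - p)) t / t ^ 2
  have hψ : EqOn ψ (F ∘ fun x => x ^ (1 - p)) (Ioc 0 1) := by
    intro x hx
    have hsq : (x ^ (1 - p)) ^ 2 = x ^ (2 * (1 - p)) := by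
      rw [← rpow_natCast, ← rpow_mul hx.1.le]
      ring_nf
    simp only [Function.comp, F, ψ, rpowDefect, symmRpowSum, hsq, div_div]
    congr 1 <;> ring
  have hmaps : MapsTo (fun x : ℝ => x ^ (1 - p)) (Ioc 0 1) (Ioc 0 1) := fun x hx =>
    ⟨rpow_pos_of_pos hx.1 _, rpow_le_one hx.1.le hx.2 hp1.le⟩
  have hcont : ContinuousOn ψ (Ioc 0 1) :=
    ((continuousOn_rpowDefect_div_sq hq0.le).comp
      (continuousOn_id.rpow_const fun x hx => Or.inl hx.1.ne') hmaps).congr hψ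
  have hmono : StrictMonoOn ψ (Ioc 0 1) :=
    ((strictMonoOn_rpowDefect_div_sq hq0 hq1 hq23).comp
      ((strictMonoOn_rpow_Ici_of_exponent_pos hp1).mono fun x hx => hx.1.le) hmaps).congr
      hψ.symm
  have hlim : Tendsto ψ (𝓝[>] 0) (𝓝 1) :=
    ((tendsto_rpowDefect_div_sq hq0.ne' hq1).comp (tendsto_rpow_nhdsGT_zero hp1)).congr'
      (hψ.symm.eventuallyEq_of_mem (Ioc_mem_nhdsGT one_pos))
  have hψ1 : ψ 1 = (1 - 2 ^ (1 - 2 * p)) / ((2 * p - 1) * (1 - p)) := by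
    have h2q : (2 : ℝ) ^ (2 * (1 - p)) = 2 * 2 ^ (1 - 2 * p) := by
      rw [show 2 * (1 - p) = 1 + (1 - 2 * p) by ring, rpow_add two_pos, rpow_one]
    simp only [ψ, one_rpow, mul_one, sub_self, zero_rpow hq0.ne', sub_zero]
    rw [one_add_one_eq_two, h2q, ← mul_one_sub, mul_assoc 2,
      mul_div_mul_left _ _ two_ne_zero]
  exact ⟨hcont, hmono, hψ1 ▸ hmono.bijOn_Ioc_of_tendsto_s7 one_pos hcont hlim, hlim⟩
end

section
/- Let p ∈ (-∞, 1), p ≠ 1/2, p ≠ -1/2, p ≠ 0. Then the inequality (2p-1)(1-p)/(1 - 2^{1-2p}) ≤ 1 holds if and only if p ∉ (-1/2, 0). Moreover, equality (2p-1)(1-p)/(1-2^{1-2p}) = 1 holds (among p ∈ (-∞,1) \ {1/2}) if and only if p ∈ {-1/2, 0}. -/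
/-!
Put `t = 1 - 2p`. The numerator minus the denominator of the quotient is
`interpError t = 2 ^ t - (t ^ 2 + t + 2) / 2`, the error of the quadratic interpolating `2 ^ t` at
`0, 1, 2`. Its second derivative `2 ^ t * log 2 ^ 2 - 1` changes sign once, between `1` and `2`, so
it is strictly concave and then strictly convex; with its zeros at the nodes this forces it to have
the sign of `t (t - 1) (t - 2)`. As `1 - 2 ^ t` has the sign of `-t`, the quotient minus `1` has the
sign of `-(t - 1) (t - 2) = -2p (2p + 1)`.
-/

open Set Real

section SecantSlopes

variable {𝕜 : Type*} [Field 𝕜] [LinearOrder 𝕜] [IsStrictOrderedRing 𝕜] {s : Set 𝕜} {f : 𝕜 → 𝕜}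
  {x y z : 𝕜}

theorem StrictConvexOn.lt_right_of_left_le (hf : StrictConvexOn 𝕜 s f) (hx : x ∈ s) (hz : z ∈ s)
    (hxy : x < y) (hyz : y < z) (h : f x ≤ f y) : f y < f z := by
  have hslope : 0 < (f z - f y) / (z - y) :=
    (div_nonneg (sub_nonneg.2 h) (sub_pos.2 hxy).le).trans_lt
      (hf.slope_strict_mono_adjacent hx hz hxy hyz)
  linarith [(lt_div_iff₀ (sub_pos.2 hyz)).1 hslope]

theorem StrictConvexOn.lt_left_of_right_le (hf : StrictConvexOn 𝕜 s f) (hx : x ∈ s) (hz : z ∈ s)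
    (hxy : x < y) (hyz : y < z) (h : f z ≤ f y) : f y < f x := by
  have hslope : (f y - f x) / (y - x) < 0 :=
    (hf.slope_strict_mono_adjacent hx hz hxy hyz).trans_le
      (div_nonpos_of_nonpos_of_nonneg (sub_nonpos.2 h) (sub_pos.2 hyz).le)
  linarith [(div_lt_iff₀ (sub_pos.2 hxy)).1 hslope]

theorem StrictConcaveOn.right_lt_of_le_left (hf : StrictConcaveOn 𝕜 s f) (hx : x ∈ s)
    (hz : z ∈ s) (hxy : x < y) (hyz : y < z) (h : f y ≤ f x) : f z < f y :=
  neg_lt_neg_iff.1 (hf.neg.lt_right_of_left_le hx hz hxy hyz (neg_le_neg h))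

theorem StrictConcaveOn.left_lt_of_le_right (hf : StrictConcaveOn 𝕜 s f) (hx : x ∈ s)
    (hz : z ∈ s) (hxy : x < y) (hyz : y < z) (h : f y ≤ f z) : f x < f y :=
  neg_lt_neg_iff.1 (hf.neg.lt_left_of_right_le hx hz hxy hyz (neg_le_neg h))

end SecantSlopes

section Sign

variable {α : Type*} [Field α] [LinearOrder α] [IsStrictOrderedRing α]

theorem sign_inv₀ (a : α) : SignType.sign a⁻¹ = SignType.sign a := by
  rcases lt_trichotomy a 0 with ha | rfl | ha
  · rw [sign_neg ha, sign_neg (inv_lt_zero.2 ha)]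
  · rw [inv_zero]
  · rw [sign_pos ha, sign_pos (inv_pos.2 ha)]

theorem sign_div (a b : α) : SignType.sign (a / b) = SignType.sign a * SignType.sign b := by
  rw [div_eq_mul_inv, sign_mul, sign_inv₀]

end Sign

/-- `(t ^ 2 + t + 2) / 2` interpolates `2 ^ t` at the nodes `0, 1, 2`. -/
noncomputable def interpError (t : ℝ) : ℝ := 2 ^ t - (t ^ 2 + t + 2) / 2

theorem interpError_zero : interpError 0 = 0 := by norm_num [interpError]

theorem interpError_one : interpError 1 = 0 := by norm_num [interpError]

theorem interpError_two : interpError 2 = 0 := by norm_num [interpError]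

theorem continuous_interpError : Continuous interpError := by
  unfold interpError; fun_prop (disch := norm_num)

theorem deriv_interpError : deriv interpError = fun t => 2 ^ t * log 2 - (t + 1 / 2) := by
  funext t
  refine HasDerivAt.deriv ?_
  have hquad : HasDerivAt (fun t : ℝ => (t ^ 2 + t + 2) / 2) (t + 1 / 2) t :=
    ((((hasDerivAt_pow 2 t).add (hasDerivAt_id t)).add_const 2).div_const 2).congr_deriv
      (by norm_num; ring)
  exact (Real.hasStrictDerivAt_const_rpow two_pos t).hasDerivAt.sub hquad

theorem iteratedDeriv_two_interpError (t : ℝ) :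
    deriv^[2] interpError t = 2 ^ t * log 2 ^ 2 - 1 := by
  have hlin : HasDerivAt (fun t : ℝ => t + 1 / 2) 1 t := (hasDerivAt_id t).add_const _
  have hexp := (Real.hasStrictDerivAt_const_rpow two_pos t).hasDerivAt.mul_const (log 2)
  rw [Function.iterate_succ_apply, Function.iterate_one, deriv_interpError]
  exact (hexp.sub hlin).deriv.trans (by ring)

/-- The zero of `deriv^[2] interpError`: `2 ^ inflection * log 2 ^ 2 = 1`. -/
noncomputable def inflection : ℝ := logb 2 (log 2 ^ 2)⁻¹

theorem one_lt_inflection : 1 < inflection := by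
  have := Real.log_two_lt_d9
  have := Real.log_two_gt_d9
  rw [inflection, Real.lt_logb_iff_rpow_lt one_lt_two (by positivity), rpow_one,
    lt_inv_comm₀ two_pos (by positivity)]
  nlinarith

theorem inflection_lt_two : inflection < 2 := by
  have := Real.log_two_gt_d9
  rw [inflection, Real.logb_lt_iff_lt_rpow one_lt_two (by positivity),
    inv_lt_comm₀ (by positivity) (by positivity)]
  norm_num
  nlinarith

theorem two_rpow_inflection : (2 : ℝ) ^ inflection = (log 2 ^ 2)⁻¹ :=
  Real.rpow_logb two_pos (by norm_num) (by positivity)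

theorem iteratedDeriv_two_interpError_neg_iff (t : ℝ) :
    deriv^[2] interpError t < 0 ↔ t < inflection := by
  rw [iteratedDeriv_two_interpError, sub_neg, ← lt_div_iff₀ (by positivity), one_div,
    ← two_rpow_inflection, Real.rpow_lt_rpow_left_iff one_lt_two]

theorem iteratedDeriv_two_interpError_pos_iff (t : ℝ) :
    0 < deriv^[2] interpError t ↔ inflection < t := by
  rw [iteratedDeriv_two_interpError, sub_pos, ← div_lt_iff₀ (by positivity), one_div,
    ← two_rpow_inflection, Real.rpow_lt_rpow_left_iff one_lt_two]

theorem strictConcaveOn_interpError : StrictConcaveOn ℝ (Iic inflection) interpError :=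
  strictConcaveOn_of_deriv2_neg (convex_Iic _) continuous_interpError.continuousOn
    fun t ht => (iteratedDeriv_two_interpError_neg_iff t).2 (by simpa using ht)

theorem strictConvexOn_interpError : StrictConvexOn ℝ (Ici inflection) interpError :=
  strictConvexOn_of_deriv2_pos (convex_Ici _) continuous_interpError.continuousOn
    fun t ht => (iteratedDeriv_two_interpError_pos_iff t).2 (by simpa using ht)

theorem interpError_neg_of_neg {t : ℝ} (ht : t < 0) : interpError t < 0 := by
  have h := strictConcaveOn_interpError.left_lt_of_le_right (y := 0) (z := 1)
    (mem_Iic.2 (ht.trans (zero_lt_one.trans one_lt_inflection)).le) one_lt_inflection.le ht one_pos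
    (by rw [interpError_zero, interpError_one])
  rwa [interpError_zero] at h

theorem interpError_pos_of_mem_Ioo_zero_one {t : ℝ} (ht : t ∈ Ioo 0 1) : 0 < interpError t := by
  have h := strictConcaveOn_interpError.lt_on_openSegment (x := 0) (y := 1)
    (mem_Iic.2 (zero_lt_one.trans one_lt_inflection).le) one_lt_inflection.le zero_ne_one
    (by rwa [openSegment_eq_Ioo one_pos])
  rwa [interpError_zero, interpError_one, min_self] at h

theorem interpError_neg_of_mem_Ioc_one_inflection {t : ℝ} (ht : t ∈ Ioc 1 inflection) :
    interpError t < 0 := by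
  have h := strictConcaveOn_interpError.right_lt_of_le_left (x := 0) (y := 1)
    (mem_Iic.2 (zero_lt_one.trans one_lt_inflection).le) ht.2 one_pos ht.1
    (by rw [interpError_zero, interpError_one])
  rwa [interpError_one] at h

theorem interpError_inflection_neg : interpError inflection < 0 :=
  interpError_neg_of_mem_Ioc_one_inflection ⟨one_lt_inflection, le_rfl⟩

theorem interpError_neg_of_mem_Ioo_one_two {t : ℝ} (ht : t ∈ Ioo 1 2) : interpError t < 0 := by
  rcases le_or_gt t inflection with hle | hlt
  · exact interpError_neg_of_mem_Ioc_one_inflection ⟨ht.1, hle⟩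
  · have h := strictConvexOn_interpError.lt_on_openSegment (x := inflection) (y := 2)
      self_mem_Ici inflection_lt_two.le inflection_lt_two.ne
      (by rw [openSegment_eq_Ioo inflection_lt_two]; exact ⟨hlt, ht.2⟩)
    rwa [interpError_two, max_eq_right interpError_inflection_neg.le] at h

theorem interpError_pos_of_two_lt {t : ℝ} (ht : 2 < t) : 0 < interpError t := by
  have h := strictConvexOn_interpError.lt_right_of_left_le (y := 2) self_mem_Ici
    (inflection_lt_two.trans ht).le inflection_lt_two ht
    (by rw [interpError_two]; exact interpError_inflection_neg.le)
  rwa [interpError_two] at h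

theorem sign_interpError (t : ℝ) :
    SignType.sign (interpError t) = SignType.sign (t * (t - 1) * (t - 2)) := by
  rcases lt_trichotomy t 0 with ht0 | rfl | ht0
  · rw [sign_neg (interpError_neg_of_neg ht0),
      sign_neg (mul_neg_of_pos_of_neg (mul_pos_of_neg_of_neg ht0 (by linarith)) (by linarith))]
  · simp [interpError_zero]
  rcases lt_trichotomy t 1 with ht1 | rfl | ht1
  · rw [sign_pos (interpError_pos_of_mem_Ioo_zero_one ⟨ht0, ht1⟩),
      sign_pos (mul_pos_of_neg_of_neg (mul_neg_of_pos_of_neg ht0 (by linarith)) (by linarith))]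
  · simp [interpError_one]
  rcases lt_trichotomy t 2 with ht2 | rfl | ht2
  · rw [sign_neg (interpError_neg_of_mem_Ioo_one_two ⟨ht1, ht2⟩),
      sign_neg (mul_neg_of_pos_of_neg (mul_pos ht0 (by linarith)) (by linarith))]
  · simp [interpError_two]
  · rw [sign_pos (interpError_pos_of_two_lt ht2),
      sign_pos (mul_pos (mul_pos ht0 (by linarith)) (by linarith))]

theorem sign_one_sub_two_rpow (t : ℝ) : SignType.sign (1 - (2 : ℝ) ^ t) = SignType.sign (-t) := by
  rcases lt_trichotomy t 0 with ht | rfl | ht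
  · rw [sign_pos (sub_pos.2 (Real.rpow_lt_one_of_one_lt_of_neg one_lt_two ht)),
      sign_pos (neg_pos.2 ht)]
  · simp
  · rw [sign_neg (sub_neg.2 (Real.one_lt_rpow one_lt_two ht)), sign_neg (neg_neg_of_pos ht)]

theorem sign_interpError_div {t : ℝ} (ht : t ≠ 0) :
    SignType.sign (interpError t / (1 - 2 ^ t)) = SignType.sign (-((t - 1) * (t - 2))) := by
  rw [sign_div, sign_interpError, sign_one_sub_two_rpow, ← sign_mul,
    show t * (t - 1) * (t - 2) * -t = t ^ 2 * -((t - 1) * (t - 2)) by ring,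
    sign_mul, sign_pos (by positivity), one_mul]

theorem sign_ratio_sub_one {p : ℝ} (hp : p ≠ 1 / 2) :
    SignType.sign ((2 * p - 1) * (1 - p) / (1 - 2 ^ (1 - 2 * p)) - 1) =
      SignType.sign (-(p * (2 * p + 1))) := by
  have ht : 1 - 2 * p ≠ 0 := by contrapose! hp; linarith
  have hden : (1 : ℝ) - 2 ^ (1 - 2 * p) ≠ 0 := fun h =>
    ht <| neg_eq_zero.1 <| _root_.sign_eq_zero_iff.1 <| by
      rw [← sign_one_sub_two_rpow, h, _root_.sign_zero]
  rw [div_sub_one hden,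
    show (2 * p - 1) * (1 - p) - (1 - 2 ^ (1 - 2 * p)) = interpError (1 - 2 * p) by
      unfold interpError; ring,
    sign_interpError_div ht,
    show -((1 - 2 * p - 1) * (1 - 2 * p - 2)) = 2 * -(p * (2 * p + 1)) by ring,
    sign_mul, sign_pos two_pos, one_mul]

/-- for `p < 1` with `p ∉ {1/2, -1/2, 0}`,
`(2p-1)(1-p)/(1-2^{1-2p}) ≤ 1` iff `p ∉ (-1/2,0)`; moreover, for `p < 1`, `p ≠ 1/2`,
equality holds iff `p ∈ {-1/2, 0}`. -/
theorem stmt_9 :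
    (∀ p : ℝ, p < 1 → p ≠ 1 / 2 → p ≠ -(1 / 2) → p ≠ 0 →
      ((2 * p - 1) * (1 - p) / (1 - 2 ^ (1 - 2 * p)) ≤ 1 ↔
        p ∉ Set.Ioo (-(1 / 2) : ℝ) 0)) ∧
    (∀ p : ℝ, p < 1 → p ≠ 1 / 2 →
      ((2 * p - 1) * (1 - p) / (1 - 2 ^ (1 - 2 * p)) = 1 ↔
        (p = -(1 / 2) ∨ p = 0))) := by
  refine ⟨fun p _ hp _ _ => ?_, fun p _ hp => ?_⟩
  · rw [← sub_nonpos, ← sign_nonpos_iff, sign_ratio_sub_one hp, sign_nonpos_iff, neg_nonpos,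
      mem_Ioo, not_and_or, not_lt, not_lt]
    constructor
    · intro h
      by_contra! hp'
      nlinarith
    · rintro (h | h) <;> nlinarith
  · rw [← sub_eq_zero, ← _root_.sign_eq_zero_iff, sign_ratio_sub_one hp,
      _root_.sign_eq_zero_iff, neg_eq_zero, mul_eq_zero, or_comm]
    refine or_congr ⟨fun h => by linarith, fun h => by linarith⟩ Iff.rfl
end

section
/- Let p = 1/2 and define for h ∈ (0,1) and y ∈ [0,∞) the function φ(h,y) = (1/2)∫_{(y - a(h,y), y + a(h,y))} (a(h,y) - |u-y|)·(2/u) du, where a(h,y) = min(√h·√y, y). Then for y ≥ h one has φ(h,y) = ψ(h/y)·h with ψ(x) = [(1+√x)log(1+√x) + (1-√x)log(1-√x)]/x, and for 0 ≤ y < h one has φ(h,y) = 2·log(2)·y. -/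
/-!
The weight `2 / u` is the second derivative of `f u = 2 u log u`, so integrating it against the
tent `a - |u - y|` gives the second difference `f (y + a) + f (y - a) - 2 f y`; this is computed
by the fundamental theorem of calculus on each half of the tent (the integrand is nonnegative,
which also covers the endpoint `u = 0` when `a = y`). Both closed forms then follow from
`(x t) log (x t) = t (x log x) + x (t log t)`, with `a = y √(h / y)` for `y ≥ h` and `a = y`
for `y < h`.
-/

open Set Real MeasureTheory intervalIntegral

theorem mul_log_mul (x t : ℝ) :
    x * t * log (x * t) = t * (x * log x) + x * (t * log t) := by
  have := negMulLog_mul x t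
  simp only [negMulLog] at this
  linarith

theorem intervalIntegrable_and_integral_eq_sub_of_nonneg {f f' : ℝ → ℝ}
    {b c : ℝ} (hbc : b ≤ c) (hcont : ContinuousOn f (Icc b c))
    (hderiv : ∀ x ∈ Ioo b c, HasDerivAt f (f' x) x)
    (hpos : ∀ x ∈ Ioo b c, 0 ≤ f' x) :
    IntervalIntegrable f' volume b c ∧ ∫ x in b..c, f' x = f c - f b := by
  have hint : IntervalIntegrable f' volume b c :=
    (intervalIntegrable_iff_integrableOn_Ioc_of_le hbc).2
      (integrableOn_deriv_of_nonneg hcont hderiv hpos)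
  exact ⟨hint, integral_eq_sub_of_hasDerivAt_of_le hbc hcont hderiv hint⟩

theorem continuousOn_const_mul_log_Icc {b c d : ℝ} (h : 0 < b ∨ c = 0) :
    ContinuousOn (fun u => c * log u) (Icc b d) := by
  rcases h with hb | rfl
  · exact continuousOn_const.mul (continuousOn_log.mono fun u hu => (hb.trans_le hu.1).ne')
  · simpa using continuousOn_const

section TentIntegral

variable {a y : ℝ}

theorem intervalIntegrable_and_integral_tent_left (ha : 0 ≤ a) (hay : a ≤ y) :
    IntervalIntegrable (fun u => (a - |u - y|) * (2 / u)) volume (y - a) y ∧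
      ∫ u in (y - a)..y, (a - |u - y|) * (2 / u) =
        2 * a - 2 * (y - a) * (log y - log (y - a)) := by
  have hb : 0 ≤ y - a := sub_nonneg.2 hay
  have hderiv : ∀ u ∈ Ioo (y - a) y,
      HasDerivAt (fun u => 2 * u - 2 * (y - a) * log u) ((a - |u - y|) * (2 / u)) u := by
    intro u ⟨hu₁, hu₂⟩
    have hu : 0 < u := hb.trans_lt hu₁
    refine (((hasDerivAt_id u).const_mul 2).sub
      ((hasDerivAt_log hu.ne').const_mul (2 * (y - a)))).congr_deriv ?_
    rw [abs_of_neg (by linarith)]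
    field_simp
    ring
  have hcont : ContinuousOn (fun u => 2 * u - 2 * (y - a) * log u) (Icc (y - a) y) :=
    (continuousOn_const.mul continuousOn_id).sub
      (continuousOn_const_mul_log_Icc (hb.lt_or_eq.imp_right fun h => by rw [← h, mul_zero]))
  obtain ⟨hint, hval⟩ :=
    intervalIntegrable_and_integral_eq_sub_of_nonneg (by linarith) hcont hderiv
    fun u ⟨hu₁, hu₂⟩ => mul_nonneg (by rw [abs_of_neg (by linarith)]; linarith)
      (div_nonneg zero_le_two (by linarith))
  exact ⟨hint, by rw [hval]; ring⟩

theorem intervalIntegrable_and_integral_tent_right (ha : 0 ≤ a) (hay : a ≤ y) :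
    IntervalIntegrable (fun u => (a - |u - y|) * (2 / u)) volume y (y + a) ∧
      ∫ u in y..(y + a), (a - |u - y|) * (2 / u) =
        2 * (y + a) * (log (y + a) - log y) - 2 * a := by
  have hy : 0 ≤ y := ha.trans hay
  have hderiv : ∀ u ∈ Ioo y (y + a),
      HasDerivAt (fun u => 2 * (y + a) * log u - 2 * u) ((a - |u - y|) * (2 / u)) u := by
    rintro u ⟨hu₁, -⟩
    have hu : 0 < u := hy.trans_lt hu₁
    refine (((hasDerivAt_log hu.ne').const_mul (2 * (y + a))).sub
      ((hasDerivAt_id u).const_mul 2)).congr_deriv ?_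
    rw [abs_of_pos (by linarith)]
    field_simp
    ring
  have hcont : ContinuousOn (fun u => 2 * (y + a) * log u - 2 * u) (Icc y (y + a)) :=
    (continuousOn_const_mul_log_Icc (hy.lt_or_eq.imp_right fun h => by
      rw [← h, (le_antisymm (h ▸ hay) ha : a = 0)]; ring)).sub
      (continuousOn_const.mul continuousOn_id)
  obtain ⟨hint, hval⟩ :=
    intervalIntegrable_and_integral_eq_sub_of_nonneg (by linarith) hcont hderiv
    fun u ⟨hu₁, hu₂⟩ => mul_nonneg (by rw [abs_of_pos (by linarith)]; linarith)
      (div_nonneg zero_le_two (by linarith))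
  exact ⟨hint, by rw [hval]; ring⟩

theorem integral_Ioo_tent_mul_two_div (ha : 0 ≤ a) (hay : a ≤ y) :
    ∫ u in Ioo (y - a) (y + a), (a - |u - y|) * (2 / u) =
      2 * ((y + a) * log (y + a) + (y - a) * log (y - a) - 2 * (y * log y)) := by
  obtain ⟨hint₁, hval₁⟩ := intervalIntegrable_and_integral_tent_left ha hay
  obtain ⟨hint₂, hval₂⟩ := intervalIntegrable_and_integral_tent_right ha hay
  rw [← integral_Ioc_eq_integral_Ioo, ← intervalIntegral.integral_of_le (by linarith),
    ← integral_add_adjacent_intervals hint₁ hint₂, hval₁, hval₂]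
  ring

end TentIntegral

theorem min_sqrt_mul_sqrt_of_le {h y : ℝ} (hy : 0 < y) (hhy : h ≤ y) :
    min (√h * √y) y = y * √(h / y) := by
  have hle : √h * √y ≤ y :=
    (mul_le_mul_of_nonneg_right (sqrt_le_sqrt hhy) (sqrt_nonneg y)).trans_eq (mul_self_sqrt hy.le)
  rw [min_eq_left hle, sqrt_div' h hy.le]
  field_simp
  rw [sq_sqrt hy.le]

theorem min_sqrt_mul_sqrt_of_ge {h y : ℝ} (hy : 0 ≤ y) (hyh : y ≤ h) :
    min (√h * √y) y = y :=
  min_eq_right <| calc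
    y = √y * √y := (mul_self_sqrt hy).symm
    _ ≤ √h * √y := mul_le_mul_of_nonneg_right (sqrt_le_sqrt hyh) (sqrt_nonneg y)

/-- for `p = 1/2`, with scale factor `a(h,y) = min(√h √y, y)` and
`φ(h,y) = (1/2)∫_{(y-a, y+a)} (a - |u-y|)(2/u) du`, one has `φ(h,y) = ψ(h/y) h`
for `y ≥ h` and `φ(h,y) = 2 log(2) y` for `0 ≤ y < h`. -/
theorem stmt_10 (h : ℝ) (hh : h ∈ Set.Ioo (0 : ℝ) 1) :
    let a : ℝ → ℝ := fun y => min (Real.sqrt h * Real.sqrt y) y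
    let φ : ℝ → ℝ :=
      fun y => (1 / 2) * ∫ u in Set.Ioo (y - a y) (y + a y), (a y - |u - y|) * (2 / u)
    let ψ : ℝ → ℝ := fun x =>
      ((1 + Real.sqrt x) * Real.log (1 + Real.sqrt x) +
        (1 - Real.sqrt x) * Real.log (1 - Real.sqrt x)) / x
    (∀ y : ℝ, h ≤ y → φ y = ψ (h / y) * h) ∧
    (∀ y : ℝ, 0 ≤ y → y < h → φ y = 2 * Real.log 2 * y) := by
  intro a φ ψ
  refine ⟨fun y hhy => ?_, fun y hy hyh => ?_⟩
  · have hh₀ : 0 < h := hh.1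
    have hy : 0 < y := hh₀.trans_le hhy
    have hs : √(h / y) ≤ 1 := sqrt_le_one.2 ((div_le_one hy).2 hhy)
    show (1 / 2) * ∫ u in Ioo (y - a y) (y + a y), (a y - |u - y|) * (2 / u) = _
    rw [show a y = y * √(h / y) from min_sqrt_mul_sqrt_of_le hy hhy,
      integral_Ioo_tent_mul_two_div (by positivity) (mul_le_of_le_one_right hy.le hs),
      show y + y * √(h / y) = y * (1 + √(h / y)) by ring,
      show y - y * √(h / y) = y * (1 - √(h / y)) by ring, mul_log_mul, mul_log_mul]
    simp only [ψ]
    field_simp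
    ring
  · show (1 / 2) * ∫ u in Ioo (y - a y) (y + a y), (a y - |u - y|) * (2 / u) = _
    rw [show a y = y from min_sqrt_mul_sqrt_of_ge hy hyh.le,
      integral_Ioo_tent_mul_two_div hy le_rfl, sub_self, ← two_mul, mul_log_mul, log_zero,
      mul_zero]
    ring
end

section
/- Let p = 1/2, a(h,y) = min(√h·√y, y) for h ∈ (0,1), y ∈ [0,∞), and φ(h,y) = (1/2)∫_{(y-a(h,y), y+a(h,y))} (a(h,y)-|u-y|)·(2/u) du. Then for every h ∈ (0,1), h = inf{φ(h,y) : y > h/(2 log 2)} and sup{φ(h,y) : y > h/(2 log 2)} = 2·log(2)·h. In particular, h ≤ φ(h,y) ≤ 2·log(2)·h for all y > h/(2·log 2). -/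
/-!
With `f t = t log t` one has `f'' u = 1 / u`, so `(1/2) ∫ (a - |u - y|) (2 / u) du` over
`(y - a, y + a)` is the second difference `f (y + a) + f (y - a) - 2 f y` (Taylor's formula with
the tent kernel). By homogeneity of `f` this equals `y g (a / y)` with `g x = f (1 + x) + f (1 - x)`.
For `y ≤ h` it is `2 log 2 · y`; for `y > h` and `x = √(h / y)` it is `h · g x / x²`.
Since `g' = 2 artanh` and `x ≤ artanh x ≤ x / (1 - x²)`, we get `x² ≤ g x ≤ x artanh x ≤ x² / (1 - x²)`
and `(g x / x²)' = 2 (x artanh x - g x) / x³ ≥ 0`, so `g x / x²` increases from `1` (as `x → 0`)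
to `g 1 = 2 log 2`.
-/

open Set Real MeasureTheory Filter Topology

lemma le_of_hasDerivAt_le {f g f' g' : ℝ → ℝ} {a b : ℝ} (hab : a ≤ b)
    (hf : ∀ x ∈ Icc a b, HasDerivAt f (f' x) x) (hg : ∀ x ∈ Icc a b, HasDerivAt g (g' x) x)
    (hle : ∀ x ∈ Ico a b, f' x ≤ g' x) (ha : f a ≤ g a) : f b ≤ g b :=
  image_le_of_deriv_right_le_deriv_boundary
    (fun x hx => (hf x hx).continuousAt.continuousWithinAt)
    (fun x hx => (hf x (Ico_subset_Icc_self hx)).hasDerivWithinAt) ha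
    (fun x hx => (hg x hx).continuousAt.continuousWithinAt)
    (fun x hx => (hg x (Ico_subset_Icc_self hx)).hasDerivWithinAt) hle ⟨hab, le_rfl⟩

namespace Real

lemma hasDerivAt_artanh {x : ℝ} (hx : x ∈ Ioo (-1) 1) :
    HasDerivAt artanh (1 / (1 - x ^ 2)) x := by
  have h := hasDerivAt_half_log_one_add_div_one_sub_sub_sum_range 0 hx.1 hx.2
  simp only [Finset.range_zero, Finset.sum_empty, sub_zero, pow_zero] at h
  refine h.congr_of_eventuallyEq (eventually_of_mem (Ioo_mem_nhds hx.1 hx.2) fun t ht => ?_)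
  exact artanh_eq_half_log (Ioo_subset_Icc_self ht)

lemma self_le_artanh {x : ℝ} (hx₀ : 0 ≤ x) (hx₁ : x < 1) : x ≤ artanh x := by
  simpa [artanh_eq_half_log ⟨by linarith, hx₁.le⟩] using sum_range_le_log_div hx₀ hx₁ 1

lemma artanh_le_div_one_sub_sq {x : ℝ} (hx₀ : 0 ≤ x) (hx₁ : x < 1) :
    artanh x ≤ x / (1 - x ^ 2) := by
  simpa [artanh_eq_half_log ⟨by linarith, hx₁.le⟩] using log_div_le_sum_range_add hx₀ hx₁ 0

end Real

/-- The second difference `f (1 + x) + f (1 - x) - 2 f 1` of `f t = t log t`. -/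
noncomputable def mulLogSecondDiff (x : ℝ) : ℝ :=
  (1 + x) * log (1 + x) + (1 - x) * log (1 - x)

lemma mulLogSecondDiff_zero : mulLogSecondDiff 0 = 0 := by
  simp [mulLogSecondDiff]

lemma mulLogSecondDiff_one : mulLogSecondDiff 1 = 2 * log 2 := by
  norm_num [mulLogSecondDiff]

lemma continuous_mulLogSecondDiff : Continuous mulLogSecondDiff :=
  (continuous_mul_log.comp (by fun_prop)).add (continuous_mul_log.comp (by fun_prop))

lemma hasDerivAt_mulLogSecondDiff {x : ℝ} (hx : x ∈ Ioo (-1) 1) :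
    HasDerivAt mulLogSecondDiff (2 * artanh x) x := by
  have hplus := (hasDerivAt_mul_log (x := 1 + x) (by linarith [hx.1])).comp x
    ((hasDerivAt_id x).const_add 1)
  have hminus := (hasDerivAt_mul_log (x := 1 - x) (by linarith [hx.2])).comp x
    ((hasDerivAt_id x).const_sub 1)
  refine (hplus.add hminus).congr_deriv ?_
  rw [artanh_eq_half_log (Ioo_subset_Icc_self hx),
    log_div (by linarith [hx.1]) (by linarith [hx.2])]
  simp
  ring

lemma mul_mulLogSecondDiff_div {y : ℝ} (hy : y ≠ 0) (a : ℝ) :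
    y * mulLogSecondDiff (a / y)
      = (y + a) * log (y + a) + (y - a) * log (y - a) - 2 * y * log y := by
  have hmulLog (s : ℝ) : y * s * log (y * s) = s * (y * log y) + y * (s * log s) := by
    have := negMulLog_mul y s
    simp only [negMulLog] at this
    linarith
  have hplus := hmulLog (1 + a / y)
  have hminus := hmulLog (1 - a / y)
  rw [mul_add, mul_one, mul_div_cancel₀ a hy] at hplus
  rw [mul_sub, mul_one, mul_div_cancel₀ a hy] at hminus
  rw [mulLogSecondDiff, hplus, hminus]
  ring

lemma sq_le_mulLogSecondDiff {x : ℝ} (hx₀ : 0 ≤ x) (hx₁ : x < 1) :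
    x ^ 2 ≤ mulLogSecondDiff x := by
  have hIoo : Icc 0 x ⊆ Ioo (-1) 1 := Icc_subset_Ioo (by norm_num) hx₁
  refine le_of_hasDerivAt_le (f := fun t => t ^ 2) hx₀ (fun t _ => hasDerivAt_pow 2 t)
    (fun t ht => hasDerivAt_mulLogSecondDiff (hIoo ht)) (fun t ht => ?_)
    (by simp [mulLogSecondDiff_zero])
  have := self_le_artanh ht.1 (ht.2.trans hx₁)
  push_cast
  linarith

lemma mulLogSecondDiff_le_mul_artanh {x : ℝ} (hx₀ : 0 ≤ x) (hx₁ : x < 1) :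
    mulLogSecondDiff x ≤ x * artanh x := by
  have hIoo : Icc 0 x ⊆ Ioo (-1) 1 := Icc_subset_Ioo (by norm_num) hx₁
  refine le_of_hasDerivAt_le hx₀ (fun t ht => hasDerivAt_mulLogSecondDiff (hIoo ht))
    (fun t ht => (hasDerivAt_id t).mul (hasDerivAt_artanh (hIoo ht))) (fun t ht => ?_)
    (by simp [mulLogSecondDiff_zero])
  have := artanh_le_div_one_sub_sq ht.1 (ht.2.trans hx₁)
  rw [id, one_mul, mul_one_div]
  linarith

lemma mulLogSecondDiff_le_sq_div {x : ℝ} (hx₀ : 0 ≤ x) (hx₁ : x < 1) :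
    mulLogSecondDiff x ≤ x ^ 2 / (1 - x ^ 2) :=
  calc mulLogSecondDiff x ≤ x * artanh x := mulLogSecondDiff_le_mul_artanh hx₀ hx₁
    _ ≤ x * (x / (1 - x ^ 2)) := by gcongr; exact artanh_le_div_one_sub_sq hx₀ hx₁
    _ = x ^ 2 / (1 - x ^ 2) := by ring

lemma monotoneOn_mulLogSecondDiff_div_sq :
    MonotoneOn (fun x => mulLogSecondDiff x / x ^ 2) (Ioc 0 1) := by
  refine monotoneOn_of_hasDerivWithinAt_nonneg (convex_Ioc 0 1)
    (f' := fun x => (2 * artanh x * x ^ 2 - mulLogSecondDiff x * (2 * x)) / (x ^ 2) ^ 2)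
    (continuous_mulLogSecondDiff.continuousOn.div (by fun_prop)
      fun x hx => pow_ne_zero 2 hx.1.ne')
    (fun x hx => ?_) (fun x hx => ?_) <;> rw [interior_Ioc] at hx
  · have hsq : HasDerivAt (fun t => t ^ 2) (2 * x) x := by simpa using hasDerivAt_pow 2 x
    exact ((hasDerivAt_mulLogSecondDiff ⟨by linarith [hx.1], hx.2⟩).div hsq
      (pow_ne_zero 2 hx.1.ne')).hasDerivWithinAt
  · have := mulLogSecondDiff_le_mul_artanh hx.1.le hx.2
    have hx₀ := hx.1
    apply div_nonneg _ (by positivity)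
    nlinarith

lemma mulLogSecondDiff_le_two_mul_log_two_mul_sq {x : ℝ} (hx₀ : 0 < x) (hx₁ : x ≤ 1) :
    mulLogSecondDiff x ≤ 2 * log 2 * x ^ 2 := by
  have h := monotoneOn_mulLogSecondDiff_div_sq ⟨hx₀, hx₁⟩ ⟨one_pos, le_rfl⟩ hx₁
  simp only [one_pow, div_one, mulLogSecondDiff_one] at h
  rwa [div_le_iff₀ (by positivity)] at h

lemma norm_tent_mul_two_div_le {a y u : ℝ} (hay : a ≤ y) (hu : u ∈ Icc (y - a) (y + a)) :
    ‖(a - |u - y|) * (2 / u)‖ ≤ 2 := by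
  obtain ⟨hu₁, hu₂⟩ := hu
  have hweight : 0 ≤ a - |u - y| := by rw [sub_nonneg, abs_le]; constructor <;> linarith
  have hweight_le : a - |u - y| ≤ u := by linarith [neg_abs_le (u - y)]
  rcases (show 0 ≤ u by linarith).eq_or_lt with rfl | hu
  · simp
  rw [Real.norm_of_nonneg (by positivity)]
  calc (a - |u - y|) * (2 / u) ≤ u * (2 / u) := by gcongr
    _ = 2 := mul_div_cancel₀ 2 hu.ne'

lemma intervalIntegrable_tent_mul_two_div {a y p q : ℝ} (hay : a ≤ y)
    (hp : y - a ≤ p) (hpq : p ≤ q) (hq : q ≤ y + a) :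
    IntervalIntegrable (fun u => (a - |u - y|) * (2 / u)) volume p q := by
  refine IntegrableOn.intervalIntegrable ?_
  rw [uIcc_of_le hpq]
  refine Measure.integrableOn_of_bounded (M := 2) measure_Icc_lt_top.ne (by fun_prop) ?_
  rw [ae_restrict_iff' measurableSet_Icc]
  exact .of_forall fun u hu =>
    norm_tent_mul_two_div_le hay ⟨hp.trans hu.1, hu.2.trans hq⟩

lemma integral_tent_mul_two_div_left {a y : ℝ} (ha : 0 < a) (hay : a ≤ y) :
    ∫ u in (y - a)..y, (a - |u - y|) * (2 / u)
      = 2 * a - 2 * (y - a) * (log y - log (y - a)) := by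
  have hcont : ContinuousOn (fun u => 2 * u - 2 * (y - a) * log u) (Icc (y - a) y) := by
    rcases hay.eq_or_lt with rfl | hlt
    · simpa using (continuous_const_mul 2).continuousOn
    · exact ContinuousOn.sub (by fun_prop) (continuousOn_const.mul
        (continuousOn_log.mono fun u hu => ne_of_gt (by linarith [hu.1])))
  rw [intervalIntegral.integral_eq_sub_of_hasDerivAt_of_le (by linarith) hcont
    (fun u hu => ?_) (intervalIntegrable_tent_mul_two_div hay le_rfl (by linarith) (by linarith))]
  · ring
  have hu₀ : 0 < u := by linarith [hu.1]
  refine (((hasDerivAt_id u).const_mul 2).sub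
    ((hasDerivAt_log hu₀.ne').const_mul (2 * (y - a)))).congr_deriv ?_
  rw [abs_of_neg (by linarith [hu.2])]
  field_simp
  ring

lemma integral_tent_mul_two_div_right {a y : ℝ} (ha : 0 < a) (hay : a ≤ y) :
    ∫ u in y..(y + a), (a - |u - y|) * (2 / u)
      = 2 * (y + a) * (log (y + a) - log y) - 2 * a := by
  have hcont : ContinuousOn (fun u => 2 * (y + a) * log u - 2 * u) (Icc y (y + a)) :=
    ContinuousOn.sub (continuousOn_const.mul
      (continuousOn_log.mono fun u hu => ne_of_gt (by linarith [hu.1]))) (by fun_prop)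
  rw [intervalIntegral.integral_eq_sub_of_hasDerivAt_of_le (by linarith) hcont
    (fun u hu => ?_) (intervalIntegrable_tent_mul_two_div hay (by linarith) (by linarith) le_rfl)]
  · ring
  have hu₀ : 0 < u := by linarith [hu.1]
  refine (((hasDerivAt_log hu₀.ne').const_mul (2 * (y + a))).sub
    ((hasDerivAt_id u).const_mul 2)).congr_deriv ?_
  rw [abs_of_pos (by linarith [hu.1])]
  field_simp
  ring

theorem half_integral_tent_mul_two_div {a y : ℝ} (ha : 0 < a) (hay : a ≤ y) :
    (1 / 2) * ∫ u in Ioo (y - a) (y + a), (a - |u - y|) * (2 / u)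
      = y * mulLogSecondDiff (a / y) := by
  rw [mul_mulLogSecondDiff_div (by linarith), ← integral_Ioc_eq_integral_Ioo,
    ← intervalIntegral.integral_of_le (by linarith),
    ← intervalIntegral.integral_add_adjacent_intervals
      (intervalIntegrable_tent_mul_two_div hay le_rfl (by linarith) (by linarith))
      (intervalIntegrable_tent_mul_two_div hay (by linarith) (by linarith) le_rfl),
    integral_tent_mul_two_div_left ha hay, integral_tent_mul_two_div_right ha hay]
  ring

lemma min_sqrt_mul_sqrt_div_of_le {h y : ℝ} (hy : 0 < y) (hyh : y ≤ h) :
    min (√h * √y) y / y = 1 := by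
  rw [min_eq_right, div_self hy.ne']
  calc y = √y * √y := (mul_self_sqrt hy.le).symm
    _ ≤ √h * √y := by gcongr

lemma min_sqrt_mul_sqrt_div_of_lt {h y : ℝ} (hh : 0 < h) (hyh : h < y) :
    min (√h * √y) y / y = √(h / y) := by
  have hy : 0 < y := hh.trans hyh
  have hsy : 0 < √y := sqrt_pos.2 hy
  rw [min_eq_left, sqrt_div' h hy.le]
  · field_simp
    rw [sq_sqrt hy.le]
  calc √h * √y ≤ √y * √y := by gcongr
    _ = y := mul_self_sqrt hy.le

lemma sqrt_div_mem_Ioo {h y : ℝ} (hh : 0 < h) (hyh : h < y) : √(h / y) ∈ Ioo 0 1 :=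
  ⟨sqrt_pos.2 (div_pos hh (hh.trans hyh)),
    (sqrt_lt' one_pos).2 (by rwa [one_pow, div_lt_one (hh.trans hyh)])⟩

lemma mul_sq_sqrt_div {h y : ℝ} (hh : 0 < h) (hyh : h < y) : y * √(h / y) ^ 2 = h := by
  have hy : y ≠ 0 := (hh.trans hyh).ne'
  rw [sq_sqrt (div_pos hh (hh.trans hyh)).le]
  field_simp

/-- `φ(h, y)` in closed form. -/
noncomputable def tentAverage (h y : ℝ) : ℝ :=
  y * mulLogSecondDiff (min (√h * √y) y / y)

lemma tentAverage_of_le {h y : ℝ} (hy : 0 < y) (hyh : y ≤ h) :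
    tentAverage h y = 2 * log 2 * y := by
  rw [tentAverage, min_sqrt_mul_sqrt_div_of_le hy hyh, mulLogSecondDiff_one, mul_comm]

lemma tentAverage_of_lt {h y : ℝ} (hh : 0 < h) (hyh : h < y) :
    tentAverage h y = y * mulLogSecondDiff √(h / y) := by
  rw [tentAverage, min_sqrt_mul_sqrt_div_of_lt hh hyh]

lemma tentAverage_mem_Icc {h y : ℝ} (hh : 0 < h) (hy : h / (2 * log 2) < y) :
    tentAverage h y ∈ Icc h (2 * log 2 * h) := by
  have hlog : 0 < 2 * log 2 := by positivity
  rcases le_or_gt y h with hyh | hyh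
  · rw [tentAverage_of_le (lt_trans (by positivity) hy) hyh]
    rw [div_lt_iff₀ hlog] at hy
    constructor <;> nlinarith
  obtain ⟨hx₀, hx₁⟩ := sqrt_div_mem_Ioo hh hyh
  have hy : 0 < y := hh.trans hyh
  rw [tentAverage_of_lt hh hyh]
  constructor
  · calc h = y * √(h / y) ^ 2 := (mul_sq_sqrt_div hh hyh).symm
      _ ≤ y * mulLogSecondDiff √(h / y) := by gcongr; exact sq_le_mulLogSecondDiff hx₀.le hx₁
  · calc y * mulLogSecondDiff √(h / y) ≤ y * (2 * log 2 * √(h / y) ^ 2) := by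
          gcongr; exact mulLogSecondDiff_le_two_mul_log_two_mul_sq hx₀ hx₁.le
      _ = 2 * log 2 * (y * √(h / y) ^ 2) := by ring
      _ = 2 * log 2 * h := by rw [mul_sq_sqrt_div hh hyh]

lemma div_two_mul_log_two_lt {h : ℝ} (hh : 0 < h) : h / (2 * log 2) < h :=
  div_lt_self hh (by linarith [log_two_gt_d9])

lemma tentAverage_le_add {h y : ℝ} (hh : 0 < h) (hyh : h < y) :
    tentAverage h y ≤ h + h ^ 2 / (y - h) := by
  obtain ⟨hx₀, hx₁⟩ := sqrt_div_mem_Ioo hh hyh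
  have hy : 0 < y := hh.trans hyh
  rw [tentAverage_of_lt hh hyh]
  calc y * mulLogSecondDiff √(h / y) ≤ y * (√(h / y) ^ 2 / (1 - √(h / y) ^ 2)) := by
        gcongr; exact mulLogSecondDiff_le_sq_div hx₀.le hx₁
    _ = h + h ^ 2 / (y - h) := by
        have : y - h ≠ 0 := by linarith
        rw [sq_sqrt (div_pos hh hy).le]
        field_simp
        ring

lemma tendsto_tentAverage_atTop {h : ℝ} (hh : 0 < h) :
    Tendsto (tentAverage h) atTop (𝓝 h) := by
  have hupper : Tendsto (fun y => h + h ^ 2 / (y - h)) atTop (𝓝 h) := by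
    simpa [← sub_eq_add_neg] using tendsto_const_nhds.add
      ((tendsto_const_nhds (x := h ^ 2)).div_atTop (tendsto_atTop_add_const_right _ (-h) tendsto_id))
  have hdom := div_two_mul_log_two_lt hh
  exact tendsto_of_tendsto_of_tendsto_of_le_of_le' tendsto_const_nhds hupper
    ((eventually_gt_atTop h).mono fun y hyh => (tentAverage_mem_Icc hh (hdom.trans hyh)).1)
    ((eventually_gt_atTop h).mono fun y hyh => tentAverage_le_add hh hyh)

lemma isGLB_image_tentAverage {h : ℝ} (hh : 0 < h) :
    IsGLB (tentAverage h '' {y | h / (2 * log 2) < y}) h := by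
  have hdom := div_two_mul_log_two_lt hh
  refine isGLB_of_mem_closure ?_ (mem_closure_of_tendsto (tendsto_tentAverage_atTop hh)
    ((eventually_gt_atTop h).mono fun y hyh => ⟨y, hdom.trans hyh, rfl⟩))
  rintro _ ⟨y, hy, rfl⟩
  exact (tentAverage_mem_Icc hh hy).1

lemma isLUB_image_tentAverage {h : ℝ} (hh : 0 < h) :
    IsLUB (tentAverage h '' {y | h / (2 * log 2) < y}) (2 * log 2 * h) := by
  have hdom := div_two_mul_log_two_lt hh
  refine IsGreatest.isLUB ⟨⟨h, hdom, tentAverage_of_le hh le_rfl⟩, ?_⟩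
  rintro _ ⟨y, hy, rfl⟩
  exact (tentAverage_mem_Icc hh hy).2

/-- for `p = 1/2`, with `a(h,y) = min(√h √y, y)` and
`φ(h,y) = (1/2)∫_{(y-a,y+a)} (a-|u-y|)(2/u) du`, for every `h ∈ (0,1)` the infimum of
`φ(h,·)` over `{y : y > h/(2 log 2)}` equals `h`, the supremum equals `2 log(2) h`,
and in particular `h ≤ φ(h,y) ≤ 2 log(2) h` on that set. -/
theorem stmt_11 (h : ℝ) (hh : h ∈ Set.Ioo (0 : ℝ) 1) :
    let a : ℝ → ℝ := fun y => min (Real.sqrt h * Real.sqrt y) y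
    let φ : ℝ → ℝ :=
      fun y => (1 / 2) * ∫ u in Set.Ioo (y - a y) (y + a y), (a y - |u - y|) * (2 / u)
    IsGLB (φ '' {y : ℝ | h / (2 * Real.log 2) < y}) h ∧
    IsLUB (φ '' {y : ℝ | h / (2 * Real.log 2) < y}) (2 * Real.log 2 * h) ∧
    (∀ y : ℝ, h / (2 * Real.log 2) < y → h ≤ φ y ∧ φ y ≤ 2 * Real.log 2 * h) := by
  intro a φ
  have hh₀ : 0 < h := hh.1
  have hφ : EqOn φ (tentAverage h) {y | h / (2 * log 2) < y} := fun y hy =>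
    have hy₀ : 0 < y := lt_trans (by positivity) hy
    half_integral_tent_mul_two_div (lt_min (by positivity) hy₀) (min_le_right _ _)
  rw [hφ.image_eq]
  exact ⟨isGLB_image_tentAverage hh₀, isLUB_image_tentAverage hh₀, fun y hy =>
    hφ hy ▸ tentAverage_mem_Icc hh₀ hy⟩
end

section
/- Let Y, Y^h (h in a set of parameters tending to 0) be continuous real-valued processes on a probability space with a fixed measure P, let l ∈ ℝ, T ∈ [0,∞), ε > 0, and define H_l(Z) = inf{t ≥ 0 : Z_t = l} (inf ∅ = ∞). Assume: (a) for every δ > 0 there exists l̄ > l with P[(H_l(Y) ∧ T) - (H_{l̄}(Y) ∧ T) ≤ ε/2] > 1 - δ/2, and (b) ‖Y^h - Y‖_{C[0,T]} → 0 in probability as h → 0, and the functional x ↦ H_{l̄}(x) ∧ T on C([0,T],ℝ) is P-a.s. continuous at Y for each l̄ > l. Then P[(H_l(Y) ∧ T) ≤ (H_l(Y^h) ∧ T) + ε] → 1 as h → 0. -/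
open MeasureTheory Filter Set Topology
open scoped ENNReal

/-!
Pathwise, a continuous path `y ≥ l` that first hits `l` at time `H` stays above `l` on the
compact interval `[0, H - ε]`, hence above `l + δ` there for some `δ > 0`. If `‖z - y‖ ≤ δ` on
`[0, T]` and `z` hits `l` at `s < T`, then `y s ≤ l + δ`, so `H ≤ s + ε`. The event that such a
margin `δ = 1/(n+1)` works increases to the whole space as `n → ∞`, while by the sup-norm
convergence in probability the event `‖Y^h - Y‖ > 1/(n+1)` has vanishing probability.
-/

theorem tendsto_measure_nhds_one_of_subset_union {Ω ι : Type*} [MeasurableSpace Ω]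
    {μ : Measure Ω} [IsProbabilityMeasure μ] {L : Filter ι} {A : ι → Set Ω}
    {G : ℕ → Set Ω} {B : ℕ → ι → Set Ω} (hG : Monotone G) (hGcover : ⋃ n, G n = univ)
    (hB : ∀ n, Tendsto (fun i => μ (B n i)) L (𝓝 0)) (hsub : ∀ n i, G n ⊆ A i ∪ B n i) :
    Tendsto (fun i => μ (A i)) L (𝓝 1) := by
  rw [ENNReal.tendsto_nhds ENNReal.one_ne_top]
  intro η hη
  have hη2 : 0 < η / 2 := ENNReal.half_pos hη.ne'
  have hGlim : Tendsto (μ ∘ G) atTop (𝓝 1) := by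
    simpa [hGcover] using tendsto_measure_iUnion_atTop (μ := μ) hG
  obtain ⟨n, hn⟩ := (hGlim.eventually_const_lt
    (ENNReal.sub_lt_self ENNReal.one_ne_top one_ne_zero hη2.ne')).exists
  filter_upwards [(hB n).eventually_lt_const hη2] with i hi
  refine ⟨tsub_le_iff_right.2 ?_, prob_le_one.trans le_self_add⟩
  calc (1 : ℝ≥0∞) ≤ μ (G n) + η / 2 := tsub_le_iff_right.1 hn.le
    _ ≤ μ (A i) + μ (B n i) + η / 2 := by
        gcongr; exact (measure_mono (hsub n i)).trans (measure_union_le _ _)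
    _ ≤ μ (A i) + (η / 2 + η / 2) := by rw [add_assoc]; gcongr
    _ = μ (A i) + η := by rw [ENNReal.add_halves]

noncomputable def cappedHitTime (T b : ℝ) (z : ℝ → ℝ) : ℝ :=
  sInf ({t | t ∈ Icc 0 T ∧ z t = b} ∪ {T})

section cappedHitTime

variable {T b : ℝ} {z : ℝ → ℝ}

lemma bddBelow_hitTimes : BddBelow ({t | t ∈ Icc 0 T ∧ z t = b} ∪ {T}) :=
  ⟨min 0 T, by rintro t (⟨⟨ht, -⟩, -⟩ | rfl) <;> simp [*]⟩

lemma cappedHitTime_le : cappedHitTime T b z ≤ T :=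
  csInf_le bddBelow_hitTimes (Or.inr rfl)

lemma cappedHitTime_le_of_eq {t : ℝ} (ht : t ∈ Icc 0 T) (hzt : z t = b) :
    cappedHitTime T b z ≤ t :=
  csInf_le bddBelow_hitTimes (Or.inl ⟨ht, hzt⟩)

lemma apply_cappedHitTime (hz : Continuous z) (hlt : cappedHitTime T b z < T) :
    0 ≤ cappedHitTime T b z ∧ z (cappedHitTime T b z) = b := by
  have hclosed : IsClosed ({t | t ∈ Icc 0 T ∧ z t = b} ∪ {T}) :=
    (isClosed_Icc.inter (isClosed_singleton.preimage hz)).union isClosed_singleton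
  rcases hclosed.csInf_mem (by simp) bddBelow_hitTimes with ⟨⟨h0, -⟩, hb⟩ | hT
  · exact ⟨h0, hb⟩
  · exact absurd hT hlt.ne

end cappedHitTime

def HasHitMargin (T l ε δ : ℝ) (y : ℝ → ℝ) : Prop :=
  ∀ s ∈ Ico 0 T, y s ≤ l + δ → cappedHitTime T l y ≤ s + ε

section HasHitMargin

variable {T l ε δ : ℝ} {y z : ℝ → ℝ}

lemma HasHitMargin.mono {δ' : ℝ} (h : HasHitMargin T l ε δ y) (hδ : δ' ≤ δ) :
    HasHitMargin T l ε δ' y :=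
  fun s hs hys => h s hs (by linarith)

lemma exists_hasHitMargin (hy : Continuous y) (hyl : ∀ t ∈ Icc 0 T, l ≤ y t) (hε : 0 < ε) :
    ∃ δ > 0, HasHitMargin T l ε δ y := by
  rcases le_or_gt (cappedHitTime T l y) ε with hsmall | hsmall
  · exact ⟨1, one_pos, fun s hs _ => by linarith [hs.1]⟩
  set K := Icc 0 (min (cappedHitTime T l y - ε) T)
  have hpos : ∀ x ∈ K, l < y x := by
    intro x hx
    refine (hyl x ⟨hx.1, hx.2.trans (min_le_right _ _)⟩).lt_of_ne fun hyx => ?_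
    have := cappedHitTime_le_of_eq ⟨hx.1, hx.2.trans (min_le_right _ _)⟩ hyx.symm
    linarith [hx.2.trans (min_le_left _ _)]
  obtain ⟨a, hla, hmin⟩ := isCompact_Icc.exists_forall_le' hy.continuousOn hpos
  refine ⟨(a - l) / 2, by linarith, fun s hs hys => ?_⟩
  by_contra! hlate
  linarith [hmin s ⟨hs.1, le_min (by linarith) hs.2.le⟩]

lemma HasHitMargin.cappedHitTime_le_add (h : HasHitMargin T l ε δ y) (hz : Continuous z)
    (hε : 0 ≤ ε) (hzy : ∀ t ∈ Icc 0 T, |z t - y t| ≤ δ) :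
    cappedHitTime T l y ≤ cappedHitTime T l z + ε := by
  rcases lt_or_ge (cappedHitTime T l z) T with hlt | hge
  · obtain ⟨h0, hzl⟩ := apply_cappedHitTime hz hlt
    refine h _ ⟨h0, hlt⟩ ?_
    have := (abs_le.1 (hzy _ ⟨h0, hlt.le⟩)).1
    linarith
  · linarith [cappedHitTime_le (T := T) (b := l) (z := y)]

end HasHitMargin

theorem stmt_15_general {Ω : Type*} [MeasurableSpace Ω] (P : Measure Ω)
    [IsProbabilityMeasure P]
    (Y : Ω → ℝ → ℝ) (Yh : ℝ → Ω → ℝ → ℝ)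
    (hYc : ∀ ω, Continuous (Y ω)) (hYhc : ∀ h ω, Continuous (Yh h ω))
    (l T ε : ℝ) (hε : 0 < ε)
    (hYl : ∀ ω t, 0 ≤ t → l ≤ Y ω t)
    -- capped hitting time for full paths
    (HT : ℝ → (ℝ → ℝ) → ℝ)
    (hHT : ∀ b z, HT b z = sInf ({t : ℝ | t ∈ Set.Icc 0 T ∧ z t = b} ∪ {T}))
    -- hypothesis (b): sup-norm convergence in probability on [0,T]
    (hb1 : ∀ δ : ℝ, 0 < δ →
      Tendsto (fun h : ℝ =>
          P {ω | δ < sSup ((fun t => |Yh h ω t - Y ω t|) '' Set.Icc 0 T)})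
        (nhdsWithin 0 (Set.Ioi 0)) (nhds 0)) :
    Tendsto (fun h : ℝ => P {ω | HT l (Y ω) ≤ HT l (Yh h ω) + ε})
      (nhdsWithin 0 (Set.Ioi 0)) (nhds 1) := by
  obtain rfl : HT = cappedHitTime T := funext fun b => funext (hHT b)
  refine tendsto_measure_nhds_one_of_subset_union
    (G := fun n : ℕ => {ω | HasHitMargin T l ε (1 / (n + 1)) (Y ω)})
    (fun m n hmn ω hω => hω.mono (Nat.one_div_le_one_div hmn)) ?_
    (fun n => hb1 _ (Nat.one_div_pos_of_nat (n := n))) ?_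
  · refine eq_univ_of_forall fun ω => mem_iUnion.2 ?_
    obtain ⟨δ, hδ, hmargin⟩ := exists_hasHitMargin (hYc ω) (fun t ht => hYl ω t ht.1) hε
    obtain ⟨n, hn⟩ := exists_nat_one_div_lt hδ
    exact ⟨n, hmargin.mono hn.le⟩
  · intro n h ω hmargin
    rcases le_or_gt (sSup ((fun t => |Yh h ω t - Y ω t|) '' Icc 0 T)) (1 / (n + 1))
      with hclose | hfar
    · have hbdd : BddAbove ((fun t => |Yh h ω t - Y ω t|) '' Icc 0 T) :=
        isCompact_Icc.bddAbove_image (((hYhc h ω).sub (hYc ω)).abs.continuousOn)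
      exact Or.inl <| hmargin.cappedHitTime_le_add (hYhc h ω) hε.le
        fun t ht => (le_csSup hbdd (mem_image_of_mem _ ht)).trans hclose
    · exact Or.inr hfar

/-- let `Y` and `Y^h` be continuous processes with values in `[l,∞)`,
and let `HT b z = (inf{t ∈ [0,T] : z t = b}) ∧ T` denote the capped hitting time.
Assume (a) for every `δ > 0` there is `l̄ > l` with
`P[HT l Y - HT l̄ Y ≤ ε/2] > 1 - δ/2`; and (b) `‖Y^h - Y‖_{C[0,T]} → 0` in
probability as `h → 0+` and, for each `l̄ > l`, the functional `x ↦ HT l̄ x` on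
`C([0,T],ℝ)` is `P`-a.s. continuous at `Y`. Then
`P[HT l Y ≤ HT l Y^h + ε] → 1` as `h → 0+`. -/
theorem stmt_15 {Ω : Type*} [MeasurableSpace Ω] (P : Measure Ω)
    [IsProbabilityMeasure P]
    (Y : Ω → ℝ → ℝ) (Yh : ℝ → Ω → ℝ → ℝ)
    (hYc : ∀ ω, Continuous (Y ω)) (hYhc : ∀ h ω, Continuous (Yh h ω))
    (l T ε : ℝ) (hT : 0 ≤ T) (hε : 0 < ε)
    (hYl : ∀ ω t, 0 ≤ t → l ≤ Y ω t) (hYhl : ∀ h ω t, 0 ≤ t → l ≤ Yh h ω t)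
    -- capped hitting time for full paths
    (HT : ℝ → (ℝ → ℝ) → ℝ)
    (hHT : ∀ b z, HT b z = sInf ({t : ℝ | t ∈ Set.Icc 0 T ∧ z t = b} ∪ {T}))
    -- capped hitting-time functional on C([0,T],ℝ)
    (HTc : ℝ → C(Set.Icc (0 : ℝ) T, ℝ) → ℝ)
    (hHTc : ∀ b x, HTc b x =
      sInf ({t : ℝ | ∃ ht : t ∈ Set.Icc (0 : ℝ) T, x ⟨t, ht⟩ = b} ∪ {T}))
    -- hypothesis (a)
    (ha : ∀ δ : ℝ, 0 < δ → ∃ lbar : ℝ, l < lbar ∧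
      ENNReal.ofReal (1 - δ / 2) <
        P {ω | HT l (Y ω) - HT lbar (Y ω) ≤ ε / 2})
    -- hypothesis (b): sup-norm convergence in probability on [0,T]
    (hb1 : ∀ δ : ℝ, 0 < δ →
      Tendsto (fun h : ℝ =>
          P {ω | δ < sSup ((fun t => |Yh h ω t - Y ω t|) '' Set.Icc 0 T)})
        (nhdsWithin 0 (Set.Ioi 0)) (nhds 0))
    -- hypothesis (b): a.s. continuity of the capped hitting-time functional at Y
    (hb2 : ∀ lbar : ℝ, l < lbar → ∀ᵐ ω ∂P,
      ContinuousAt (HTc lbar)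
        ⟨fun t : Set.Icc (0 : ℝ) T => Y ω t, (hYc ω).comp continuous_subtype_val⟩) :
    Tendsto (fun h : ℝ => P {ω | HT l (Y ω) ≤ HT l (Yh h ω) + ε})
      (nhdsWithin 0 (Set.Ioi 0)) (nhds 1) :=
  stmt_15_general P Y Yh hYc hYhc l T ε hε hYl HT hHT hb1
end
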